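/- arXiv:2507.09745 — 12 statements merged into one kernel-verified Lean document; each statement's English description precedes it below -/
import Mathlib

section
/- Let G be a nilpotent group of nilpotency class c with c > 1, and let x be an element of G. Then the subgroup H generated by x together with the commutator subgroup G' = [G,G] is nilpotent of class at most c - 1. -/
/-- If `G` is nilpotent of class `c > 1` and `x ∈ G`, then the subgroup generated by `x`
together with the commutator subgroup `G' = [G,G]` is nilpotent of class at most `c - 1`. -/
theorem stmt_0 {G : Type*} [Group G] [Group.IsNilpotent G] {c : ℕ}
    (hc : Group.nilpotencyClass G = c) (hc1 : 1 < c) (x : G) :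
    Group.nilpotencyClass ↥(Subgroup.closure ({x} : Set G) ⊔ commutator G) ≤ c - 1 := by
  set H : Subgroup G := Subgroup.closure ({x} : Set G) ⊔ commutator G with hHdef
  -- Step 1 : ⁅H, H⁆ ≤ lowerCentralSeries G 2
  have hHH : ⁅H, H⁆ ≤ Subgroup.lowerCentralSeries (⊤ : Subgroup G) 2 := by
    set N : Subgroup G := Subgroup.lowerCentralSeries (⊤ : Subgroup G) 2 with hN
    have hNnormal : N.Normal := by infer_instance
    set π : G →* G ⧸ N := QuotientGroup.mk' N with hπ
    have hker : π.ker = N := QuotientGroup.ker_mk' N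
    rw [← hker, ← Subgroup.map_eq_bot_iff, Subgroup.map_commutator]
    set A : Subgroup (G ⧸ N) := Subgroup.closure ({π x} : Set (G ⧸ N)) with hA
    set C : Subgroup (G ⧸ N) := commutator (G ⧸ N) with hC
    have hmapH : H.map π = A ⊔ C := by
      rw [hHdef, Subgroup.map_sup]
      congr 1
      · rw [MonoidHom.map_closure, Set.image_singleton]
      · rw [hC, commutator_def, commutator_def, Subgroup.map_commutator,
          Subgroup.map_top_of_surjective π (QuotientGroup.mk'_surjective N)]
    -- C is central : ⁅C, ⊤⁆ = ⊥
    have hCtop : ⁅C, (⊤ : Subgroup (G ⧸ N))⁆ = ⊥ := by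
      have h1 : C = (Subgroup.lowerCentralSeries (⊤ : Subgroup G) 1).map π := by
        rw [hC, lowerCentralSeries_one, commutator_def, commutator_def,
          Subgroup.map_commutator,
          Subgroup.map_top_of_surjective π (QuotientGroup.mk'_surjective N)]
      have h2 : ⁅C, (⊤ : Subgroup (G ⧸ N))⁆ = (Subgroup.lowerCentralSeries (⊤ : Subgroup G) 2).map π := by
        rw [h1, show Subgroup.lowerCentralSeries (⊤ : Subgroup G) 2 = ⁅Subgroup.lowerCentralSeries (⊤ : Subgroup G) 1, ⊤⁆ from rfl,
          Subgroup.map_commutator,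
          Subgroup.map_top_of_surjective π (QuotientGroup.mk'_surjective N)]
      rw [h2, Subgroup.map_eq_bot_iff, hker]
    have hCcent : ∀ s : Set (G ⧸ N), C ≤ Subgroup.centralizer s := by
      intro s
      have := Subgroup.commutator_eq_bot_iff_le_centralizer.mp hCtop
      exact this.trans (Subgroup.centralizer_le (by simp))
    -- A is commutative
    have hAcomm : A ≤ Subgroup.centralizer A := by
      rw [hA, ← Subgroup.zpowers_eq_closure]
      exact Subgroup.le_centralizer _
    have hKA : A ⊔ C ≤ Subgroup.centralizer A := sup_le hAcomm (hCcent _)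
    have hAK : A ≤ Subgroup.centralizer (A ⊔ C : Subgroup (G ⧸ N)) :=
      Subgroup.le_centralizer_iff.mpr hKA
    have hKK : A ⊔ C ≤ Subgroup.centralizer (A ⊔ C : Subgroup (G ⧸ N)) :=
      sup_le hAK (hCcent _)
    rw [hmapH]
    exact Subgroup.commutator_eq_bot_iff_le_centralizer.mpr hKK
  -- Step 2 : (lowerCentralSeries H (n+1)).map H.subtype ≤ lowerCentralSeries G (n+2)
  have key : ∀ n : ℕ,
      (Subgroup.lowerCentralSeries (⊤ : Subgroup H) (n + 1)).map H.subtype ≤ Subgroup.lowerCentralSeries (⊤ : Subgroup G) (n + 2) := by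
    intro n
    induction n with
    | zero =>
      have h1 : Subgroup.lowerCentralSeries (⊤ : Subgroup H) 1 = ⁅(⊤ : Subgroup H), ⊤⁆ := rfl
      rw [h1, Subgroup.map_commutator]
      have htop : (⊤ : Subgroup H).map H.subtype = H := by
        rw [← MonoidHom.range_eq_map, Subgroup.range_subtype]
      rw [htop]
      exact hHH
    | succ d hd =>
      have h1 : Subgroup.lowerCentralSeries (⊤ : Subgroup H) (d + 2) = ⁅Subgroup.lowerCentralSeries (⊤ : Subgroup H) (d + 1), ⊤⁆ := rfl
      rw [h1, Subgroup.map_commutator]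
      calc ⁅(Subgroup.lowerCentralSeries (⊤ : Subgroup H) (d + 1)).map H.subtype, (⊤ : Subgroup H).map H.subtype⁆
          ≤ ⁅Subgroup.lowerCentralSeries (⊤ : Subgroup G) (d + 2), ⊤⁆ := Subgroup.commutator_mono hd le_top
        _ = Subgroup.lowerCentralSeries (⊤ : Subgroup G) (d + 3) := rfl
  -- Step 3 : conclude
  have hc2 : c - 2 + 2 = c := by omega
  have hbot : Subgroup.lowerCentralSeries (⊤ : Subgroup H) (c - 1) = ⊥ := by
    have := key (c - 2)
    rw [show c - 2 + 1 = c - 1 by omega, hc2] at this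
    have hGc : Subgroup.lowerCentralSeries (⊤ : Subgroup G) c = ⊥ := by
      rw [← hc]; exact lowerCentralSeries_nilpotencyClass
    rw [hGc, le_bot_iff, Subgroup.map_eq_bot_iff, Subgroup.ker_subtype, le_bot_iff] at this
    exact this
  exact lowerCentralSeries_eq_bot_iff_nilpotencyClass_le.mp hbot
end

section
/- A group G is polycyclic, i.e. it has a finite series of subgroups G = G_0 ≥ G_1 ≥ ... ≥ G_r = 1 such that for each i = 1, ..., r the subgroup G_i is normal in G_{i-1} and G_{i-1}/G_i is cyclic, if and only if G is soluble and every subgroup of G is finitely generated. -/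
/-- A group `G` is polycyclic if it has a finite series of subgroups
`G = G_0 ≥ G_1 ≥ ... ≥ G_r = 1` with each `G_{i}` normal in `G_{i-1}` and each
factor `G_{i-1}/G_i` cyclic (the factor being cyclic is expressed by saying
that `G_{i-1}` is generated by `G_i` together with a single element). -/
def IsPolycyclic (G : Type*) [Group G] : Prop :=
  ∃ (r : ℕ) (s : ℕ → Subgroup G),
    s 0 = ⊤ ∧ s r = ⊥ ∧
    (∀ i < r, s (i + 1) ≤ s i) ∧
    (∀ i < r, ∀ x ∈ s i, ∀ y ∈ s (i + 1), x * y * x⁻¹ ∈ s (i + 1)) ∧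
    (∀ i < r, ∃ g : G, s i = s (i + 1) ⊔ Subgroup.closure {g})
namespace PolyProofAux

open Subgroup

variable {G : Type*} [Group G]

/-- The set of elements representable as `k * g ^ n` with `k ∈ K` forms a subgroup,
provided `K` is normalized by powers of `g`. -/
def degT (K : Subgroup G) (g : G)
    (hg : ∀ n : ℤ, ∀ k ∈ K, g ^ n * k * g ^ (-n) ∈ K) : Subgroup G where
  carrier := {x | ∃ n : ℤ, x * g ^ (-n) ∈ K}
  one_mem' := ⟨0, by simpa using K.one_mem⟩
  mul_mem' := by
    rintro x y ⟨n, hn⟩ ⟨m, hm⟩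
    refine ⟨n + m, ?_⟩
    have h : x * y * g ^ (-(n + m)) =
        (x * g ^ (-n)) * (g ^ n * (y * g ^ (-m)) * g ^ (-n)) := by group
    rw [h]
    exact K.mul_mem hn (hg n _ hm)
  inv_mem' := by
    rintro x ⟨n, hn⟩
    refine ⟨-n, ?_⟩
    have h : x⁻¹ * g ^ (-(-n)) = g ^ (-n) * (x * g ^ (-n))⁻¹ * g ^ (-(-n)) := by group
    rw [h]
    exact hg (-n) _ (K.inv_mem hn)

theorem exists_deg {K : Subgroup G} {g : G}
    (hg : ∀ n : ℤ, ∀ k ∈ K, g ^ n * k * g ^ (-n) ∈ K)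
    {x : G} (hx : x ∈ K ⊔ closure {g}) : ∃ n : ℤ, x * g ^ (-n) ∈ K := by
  have h1 : K ≤ degT K g hg := fun k hk => ⟨0, by simpa using hk⟩
  have h2 : closure {g} ≤ degT K g hg := by
    rw [closure_le]
    rintro y rfl
    exact ⟨1, by simpa using K.one_mem⟩
  exact (sup_le h1 h2) hx

theorem commutator_mem {K : Subgroup G} {g : G}
    (hg : ∀ n : ℤ, ∀ k ∈ K, g ^ n * k * g ^ (-n) ∈ K)
    {x y : G} (hx : x ∈ K ⊔ closure {g}) (hy : y ∈ K ⊔ closure {g}) :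
    x * y * x⁻¹ * y⁻¹ ∈ K := by
  obtain ⟨n, hn⟩ := exists_deg hg hx
  obtain ⟨m, hm⟩ := exists_deg hg hy
  have h : x * y * x⁻¹ * y⁻¹ =
      (x * g ^ (-n)) * (g ^ n * (y * g ^ (-m)) * g ^ (-n)) *
        (g ^ m * (x * g ^ (-n))⁻¹ * g ^ (-m)) * (y * g ^ (-m))⁻¹ := by group
  rw [h]
  exact K.mul_mem (K.mul_mem (K.mul_mem hn (hg n _ hm)) (hg m _ (K.inv_mem hn)))
    (K.inv_mem hm)

theorem subgroup_split {K : Subgroup G} {g : G}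
    (hg : ∀ n : ℤ, ∀ k ∈ K, g ^ n * k * g ^ (-n) ∈ K)
    (L : Subgroup G) (hL : L ≤ K ⊔ closure {g}) :
    ∃ l : G, L = (K ⊓ L) ⊔ closure {l} := by
  -- the set of "degrees" of elements of L
  set A : AddSubgroup ℤ :=
    { carrier := {n | ∃ x ∈ L, x * g ^ (-n) ∈ K}
      zero_mem' := ⟨1, L.one_mem, by simpa using K.one_mem⟩
      add_mem' := by
        rintro n m ⟨x, hxL, hx⟩ ⟨y, hyL, hy⟩
        refine ⟨x * y, L.mul_mem hxL hyL, ?_⟩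
        have h : x * y * g ^ (-(n + m)) =
            (x * g ^ (-n)) * (g ^ n * (y * g ^ (-m)) * g ^ (-n)) := by group
        rw [h]
        exact K.mul_mem hx (hg n _ hy)
      neg_mem' := by
        rintro n ⟨x, hxL, hx⟩
        refine ⟨x⁻¹, L.inv_mem hxL, ?_⟩
        have h : x⁻¹ * g ^ (-(-n)) = g ^ (-n) * (x * g ^ (-n))⁻¹ * g ^ (-(-n)) := by group
        rw [h]
        exact hg (-n) _ (K.inv_mem hx) } with hA
  obtain ⟨m, hmA⟩ := Int.subgroup_cyclic A
  have hmem : m ∈ A := by rw [hmA]; exact AddSubgroup.subset_closure rfl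
  obtain ⟨l, hlL, hl⟩ := hmem
  refine ⟨l, le_antisymm ?_ (sup_le inf_le_right ((closure_le _).2 (by simpa using hlL)))⟩
  -- powers of l
  have hpow : ∀ t : ℤ, ∃ k ∈ K, l ^ t = k * g ^ (t * m) := by
    intro t
    induction t using Int.induction_on with
    | zero => exact ⟨1, K.one_mem, by simp⟩
    | succ t ih =>
      obtain ⟨k, hk, hkl⟩ := ih
      refine ⟨k * (g ^ (t * m) * (l * g ^ (-m)) * g ^ (-(t * m))), K.mul_mem hk
        (hg (t * m) _ hl), ?_⟩
      have : ((t : ℤ) + 1) * m = t * m + m := by ring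
      rw [this, show l ^ ((t : ℤ) + 1) = l ^ (t : ℤ) * l from by group, hkl]
      group
    | pred t ih =>
      obtain ⟨k, hk, hkl⟩ := ih
      refine ⟨k * (g ^ (-t * m - m) * (l * g ^ (-m))⁻¹ * g ^ (-(-t * m - m))),
        K.mul_mem hk (hg (-t * m - m) _ (K.inv_mem hl)), ?_⟩
      have : (-(t : ℤ) - 1) * m = -t * m - m := by ring
      rw [this, show l ^ (-(t : ℤ) - 1) = l ^ (-t : ℤ) * l⁻¹ from by group, hkl]
      group
  intro x hxL
  obtain ⟨n, hn⟩ := exists_deg hg (hL hxL)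
  have hnA : n ∈ A := ⟨x, hxL, hn⟩
  rw [hmA, AddSubgroup.mem_closure_singleton] at hnA
  obtain ⟨t, ht⟩ := hnA
  obtain ⟨k, hk, hkl⟩ := hpow t
  have hxk : x * l ^ (-t : ℤ) ∈ K ⊓ L := by
    constructor
    · have h : x * l ^ (-t : ℤ) = x * (l ^ (t : ℤ))⁻¹ := by group
      rw [h, hkl]
      have h2 : x * (k * g ^ (t * m))⁻¹ = (x * g ^ (-(t * m))) * k⁻¹ := by group
      rw [h2]
      have : t * m = n := by rw [← ht]; simp [smul_eq_mul, mul_comm]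
      rw [this]
      exact K.mul_mem hn (K.inv_mem hk)
    · exact L.mul_mem hxL (L.zpow_mem hlL (-t))
  have : x = (x * l ^ (-t : ℤ)) * l ^ (t : ℤ) := by group
  rw [this]
  exact Subgroup.mul_mem _ (SetLike.le_def.mp le_sup_left hxk)
    (SetLike.le_def.mp le_sup_right ((closure {l}).zpow_mem (subset_closure rfl) t))

/-- Chains of subgroups with the polycyclic property between two subgroups. -/
def Chain (A B : Subgroup G) : Prop :=
  ∃ (r : ℕ) (s : ℕ → Subgroup G),
    s 0 = A ∧ s r = B ∧
    (∀ i < r, s (i + 1) ≤ s i) ∧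
    (∀ i < r, ∀ x ∈ s i, ∀ y ∈ s (i + 1), x * y * x⁻¹ ∈ s (i + 1)) ∧
    (∀ i < r, ∃ g : G, s i = s (i + 1) ⊔ closure {g})

theorem Chain.refl (A : Subgroup G) : Chain A A :=
  ⟨0, fun _ => A, rfl, rfl, fun i hi => absurd hi (Nat.not_lt_zero i),
    fun i hi => absurd hi (Nat.not_lt_zero i), fun i hi => absurd hi (Nat.not_lt_zero i)⟩

theorem Chain.trans {A B C : Subgroup G} (h1 : Chain A B) (h2 : Chain B C) :
    Chain A C := by
  obtain ⟨r1, s, hs0, hsr, hsle, hsn, hsc⟩ := h1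
  obtain ⟨r2, t, ht0, htr, htle, htn, htc⟩ := h2
  set u : ℕ → Subgroup G := fun i => if i < r1 then s i else t (i - r1) with hu
  have hu1 : ∀ i ≤ r1, u i = s i := by
    intro i hi
    rcases lt_or_eq_of_le hi with h | h
    · simp [hu, h]
    · subst h
      simp [hu, ht0, hsr]
  have hu2 : ∀ j, u (r1 + j) = t j := by
    intro j
    have h : ¬ (r1 + j < r1) := by omega
    simp [hu, h]
  have hcase : ∀ i < r1 + r2,
      (u i = s i ∧ u (i + 1) = s (i + 1) ∧ i < r1) ∨
      (∃ j < r2, u i = t j ∧ u (i + 1) = t (j + 1)) := by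
    intro i hi
    rcases lt_or_ge i r1 with h | h
    · exact Or.inl ⟨hu1 i h.le, hu1 (i + 1) h, h⟩
    · refine Or.inr ⟨i - r1, by omega, ?_, ?_⟩
      · have h2 := hu2 (i - r1)
        rwa [show r1 + (i - r1) = i from by omega] at h2
      · have h2 := hu2 (i - r1 + 1)
        rwa [show r1 + (i - r1 + 1) = i + 1 from by omega] at h2
  refine ⟨r1 + r2, u, by rw [hu1 0 (Nat.zero_le _), hs0], by rw [hu2 r2, htr], ?_, ?_, ?_⟩
  · intro i hi
    rcases hcase i hi with ⟨e1, e2, h⟩ | ⟨j, hj, e1, e2⟩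
    · rw [e1, e2]; exact hsle i h
    · rw [e1, e2]; exact htle j hj
  · intro i hi
    rcases hcase i hi with ⟨e1, e2, h⟩ | ⟨j, hj, e1, e2⟩
    · rw [e1, e2]; exact hsn i h
    · rw [e1, e2]; exact htn j hj
  · intro i hi
    rcases hcase i hi with ⟨e1, e2, h⟩ | ⟨j, hj, e1, e2⟩
    · rw [e1, e2]; exact hsc i h
    · rw [e1, e2]; exact htc j hj

theorem Chain.single {A B : Subgroup G} (hle : B ≤ A)
    (hn : ∀ x ∈ A, ∀ y ∈ B, x * y * x⁻¹ ∈ B)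
    (hc : ∃ g : G, A = B ⊔ closure {g}) : Chain A B := by
  refine ⟨1, fun i => if i = 0 then A else B, rfl, rfl, ?_, ?_, ?_⟩
  · intro i hi
    interval_cases i
    simpa using hle
  · intro i hi
    interval_cases i
    simpa using hn
  · intro i hi
    interval_cases i
    simpa using hc

theorem chain_step {A B : Subgroup G} (hBA : B ≤ A)
    (hcomm : ∀ x ∈ A, ∀ y ∈ A, x * y * x⁻¹ * y⁻¹ ∈ B)
    (S : Finset G) (hS : ↑S ⊆ (A : Set G)) :
    Chain (B ⊔ closure ↑S) B := by
  classical
  induction S using Finset.induction_on with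
  | empty => simpa using Chain.refl B
  | @insert a S ha ih =>
    have haA : a ∈ A := hS (Finset.mem_insert_self a S)
    have hSA : ↑S ⊆ (A : Set G) := fun x hx => hS (Finset.mem_insert_of_mem hx)
    have hins : (B ⊔ closure ↑(insert a S)) = (B ⊔ closure ↑S) ⊔ closure {a} := by
      rw [Finset.coe_insert, Set.insert_eq,
        Subgroup.closure_union, sup_assoc, sup_comm (closure {a}) (closure ↑S), ← sup_assoc]
    have hsubA : ∀ {x}, x ∈ B ⊔ closure ↑(insert a S) → x ∈ A := by
      intro x hx
      refine (sup_le hBA ((closure_le _).2 ?_)) hx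
      exact hS
    refine Chain.trans (Chain.single ?_ ?_ ⟨a, hins⟩) (ih hSA)
    · rw [hins]; exact le_sup_left
    · intro x hx y hy
      have hxA : x ∈ A := hsubA hx
      have hyA : y ∈ A := hsubA (by rw [hins]; exact SetLike.le_def.mp le_sup_left hy)
      have : x * y * x⁻¹ = (x * y * x⁻¹ * y⁻¹) * y := by group
      rw [this]
      exact Subgroup.mul_mem _ (SetLike.le_def.mp le_sup_left (hcomm x hxA y hyA)) hy

end PolyProofAux
/-- A group is polycyclic if and only if it is soluble and every subgroup
is finitely generated (i.e. it satisfies the maximal condition). -/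
theorem stmt_2 {G : Type*} [Group G] :
    IsPolycyclic G ↔ IsSolvable G ∧ ∀ H : Subgroup G, H.FG := by
  constructor
  · rintro ⟨r, s, hs0, hsr, hsle, hsn, hsc⟩
    have hg' : ∀ i, i < r → ∀ g ∈ s i, ∀ (n : ℤ), ∀ k ∈ s (i + 1),
        g ^ n * k * g ^ (-n) ∈ s (i + 1) := by
      intro i hi g hgi n k hk
      have h1 : g ^ n ∈ s i := (s i).zpow_mem hgi n
      have h2 := hsn i hi (g ^ n) h1 k hk
      rwa [← zpow_neg] at h2
    have hgmem : ∀ i, i < r → ∀ g : G, s i = s (i + 1) ⊔ Subgroup.closure {g} → g ∈ s i := by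
      intro i hi g hgi
      rw [hgi]
      exact Subgroup.mem_sup_right (Subgroup.mem_closure_singleton.mpr ⟨1, zpow_one g⟩)
    constructor
    · refine (isSolvable_def G).mpr ?_
      refine ⟨r, ?_⟩
      have key : ∀ i, i ≤ r → derivedSeries G i ≤ s i := by
        intro i
        induction i with
        | zero => intro _; rw [derivedSeries_zero, hs0]
        | succ i ih =>
          intro hir
          have hi : i < r := hir
          rw [derivedSeries_succ, Subgroup.commutator_le]
          intro x hx y hy
          obtain ⟨g, hgi⟩ := hsc i hi
          have hx' : x ∈ s (i + 1) ⊔ Subgroup.closure {g} := by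
            rw [← hgi]; exact ih hi.le hx
          have hy' : y ∈ s (i + 1) ⊔ Subgroup.closure {g} := by
            rw [← hgi]; exact ih hi.le hy
          exact PolyProofAux.commutator_mem
            (fun n k hk => hg' i hi g (hgmem i hi g hgi) n k hk) hx' hy'
      have h := key r le_rfl
      rw [hsr] at h
      exact le_bot_iff.mp h
    · intro H
      have key : ∀ j, j ≤ r → (s (r - j) ⊓ H).FG := by
        intro j
        induction j with
        | zero =>
          intro _
          rw [Nat.sub_zero, hsr, bot_inf_eq]
          exact ⟨∅, by simp⟩
        | succ j ih =>
          intro hjr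
          set i := r - (j + 1) with hidef
          have hi : i < r := by omega
          have hrj : r - j = i + 1 := by omega
          have ihfg : (s (i + 1) ⊓ H).FG := by
            have := ih (by omega)
            rwa [hrj] at this
          obtain ⟨g, hgi⟩ := hsc i hi
          obtain ⟨l, hl⟩ := PolyProofAux.subgroup_split
            (fun n k hk => hg' i hi g (hgmem i hi g hgi) n k hk)
            (s i ⊓ H) (le_trans inf_le_left (le_of_eq hgi))
          have hsimp : s (i + 1) ⊓ (s i ⊓ H) = s (i + 1) ⊓ H := by
            rw [← inf_assoc, inf_eq_left.mpr (hsle i hi)]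
          rw [hsimp] at hl
          obtain ⟨T, hT⟩ := ihfg
          rw [(Subgroup.fg_iff _)]
          refine ⟨↑T ∪ {l}, ?_, T.finite_toSet.union (Set.finite_singleton l)⟩
          rw [Subgroup.closure_union, hT, ← hl]
      have h := key r le_rfl
      rwa [Nat.sub_self, hs0, top_inf_eq] at h
  · rintro ⟨hsolv, hFG⟩
    obtain ⟨n, hn⟩ := (isSolvable_def G).mp hsolv
    have key : ∀ m, PolyProofAux.Chain (⊤ : Subgroup G) (derivedSeries G m) := by
      intro m
      induction m with
      | zero => rw [derivedSeries_zero]; exact PolyProofAux.Chain.refl ⊤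
      | succ m ih =>
        refine ih.trans ?_
        obtain ⟨S, hS⟩ := hFG (derivedSeries G m)
        have hle : derivedSeries G (m + 1) ≤ derivedSeries G m := by
          rw [derivedSeries_succ, Subgroup.commutator_le]
          intro x hx y hy
          exact mul_mem (mul_mem (mul_mem hx hy) (inv_mem hx)) (inv_mem hy)
        have hcomm : ∀ x ∈ derivedSeries G m, ∀ y ∈ derivedSeries G m,
            x * y * x⁻¹ * y⁻¹ ∈ derivedSeries G (m + 1) := by
          intro x hx y hy
          rw [derivedSeries_succ]
          exact Subgroup.commutator_mem_commutator hx hy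
        have hSsub : ↑S ⊆ (derivedSeries G m : Set G) := by
          rw [← hS]; exact Subgroup.subset_closure
        have hstep := PolyProofAux.chain_step hle hcomm S hSsub
        have hsup : derivedSeries G (m + 1) ⊔ Subgroup.closure ↑S = derivedSeries G m := by
          rw [hS]
          exact sup_eq_right.mpr hle
        rwa [hsup] at hstep
    obtain ⟨r, s, h0, hr, h1, h2, h3⟩ := key n
    exact ⟨r, s, h0, by rw [hr, hn], h1, h2, h3⟩
end

section
/- Let G be a nilpotent group generated by elements a_1, a_2, ..., a_r, where each a_i has finite order m_i. Then G is finite, and the order of G divides some power of m = m_1 · m_2 · ... · m_r. -/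
open Subgroup
open scoped IsMulCommutative

/-- Key lemma: a nilpotent group generated by a finite set of elements whose `n`-th
powers are trivial (`n ≠ 0`) is finite of cardinality dividing a power of `n`. -/
theorem stmt_4_key (n : ℕ) (hn : n ≠ 0) (G : Type u) [Group G] [Group.IsNilpotent G] :
    ∀ S : Set G, S.Finite → Subgroup.closure S = ⊤ → (∀ x ∈ S, x ^ n = 1) →
      ∃ k, Nat.card G ≠ 0 ∧ Nat.card G ∣ n ^ k := by
  refine nilpotent_center_quotient_ind
    (P := fun G _ _ => ∀ S : Set G, S.Finite → Subgroup.closure S = ⊤ →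
      (∀ x ∈ S, x ^ n = 1) → ∃ k, Nat.card G ≠ 0 ∧ Nat.card G ∣ n ^ k) G ?_ ?_
  case refine_1 =>
    intro G _ _ S _ _ _
    have h1 : Nat.card G = 1 := Nat.card_eq_one_iff_unique.mpr ⟨inferInstance, ⟨1⟩⟩
    exact ⟨0, by rw [h1]; exact one_ne_zero, by rw [h1]; exact one_dvd _⟩
  case refine_2 =>
    intro G _ _ IH S hfin hgen hpow
    set π := QuotientGroup.mk' (center G) with hπ
    have hgenQ : Subgroup.closure (π '' S) = ⊤ := by
      rw [← MonoidHom.map_closure, hgen]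
      exact Subgroup.map_top_of_surjective π (QuotientGroup.mk'_surjective _)
    have hpowQ : ∀ x ∈ π '' S, x ^ n = 1 := by
      rintro _ ⟨s, hs, rfl⟩
      rw [← map_pow, hpow s hs, map_one]
    obtain ⟨k, hQ0, hQdvd⟩ := IH (π '' S) (hfin.image π) hgenQ hpowQ
    haveI : (center G).FiniteIndex := ⟨by simpa [Subgroup.index] using hQ0⟩
    have hq : (center G).index ∣ n ^ k := by simpa [Subgroup.index] using hQdvd
    -- every element of G satisfies g ^ (index * n) = 1, via the transfer map
    have hexp : ∀ g : G, g ^ ((center G).index * n) = 1 := by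
      intro g
      have hrange : (MonoidHom.transferCenterPow G).range ≤
          (powMonoidHom n : center G →* center G).ker := by
        rw [MonoidHom.range_eq_map, ← hgen, MonoidHom.map_closure, closure_le]
        rintro _ ⟨s, hs, rfl⟩
        have : MonoidHom.transferCenterPow G s ^ n = 1 := by
          rw [← map_pow, hpow s hs, map_one]
        simpa [MonoidHom.mem_ker, powMonoidHom_apply] using this
      have h2 : MonoidHom.transferCenterPow G g ^ n = 1 := by
        simpa [MonoidHom.mem_ker, powMonoidHom_apply] using hrange ⟨g, rfl⟩
      have h3 : ((MonoidHom.transferCenterPow G g : center G) : G) ^ n = 1 := by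
        rw [← SubgroupClass.coe_pow, h2, OneMemClass.coe_one]
      rw [MonoidHom.transferCenterPow_apply] at h3
      rwa [pow_mul]
    -- the center is a finitely generated abelian group of exponent dividing index * n
    haveI : Group.FG G := Group.fg_iff.mpr ⟨S, hgen, hfin⟩
    haveI : Group.FG (center G) := Subgroup.fg_of_index_ne_zero _
    have hZdvd : Nat.card (center G) ∣
        ((center G).index * n) ^ Group.rank (center G) := by
      refine card_dvd_exponent_pow_rank' _ fun z => ?_
      exact Subtype.ext (by rw [SubgroupClass.coe_pow, OneMemClass.coe_one]; exact hexp z)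
    have hqn : (center G).index * n ∣ n ^ (k + 1) := by
      rw [pow_succ]
      exact mul_dvd_mul hq dvd_rfl
    have hZdvd' : Nat.card (center G) ∣ n ^ ((k + 1) * Group.rank (center G)) := by
      rw [pow_mul]
      exact hZdvd.trans (pow_dvd_pow_of_dvd hqn _)
    have hZ0 : Nat.card (center G) ≠ 0 := by
      intro h
      rw [h, zero_dvd_iff] at hZdvd'
      exact pow_ne_zero _ hn hZdvd'
    refine ⟨k + (k + 1) * Group.rank (center G), ?_, ?_⟩
    · rw [Subgroup.card_eq_card_quotient_mul_card_subgroup (center G)]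
      exact Nat.mul_ne_zero hQ0 hZ0
    · rw [Subgroup.card_eq_card_quotient_mul_card_subgroup (center G), pow_add]
      exact mul_dvd_mul (by simpa [Subgroup.index] using hQdvd) hZdvd'

/-- If a nilpotent group `G` is generated by elements `a_1, ..., a_r` of finite orders
`m_1, ..., m_r`, then `G` is finite and `|G|` divides a power of `m = m_1 ⋯ m_r`. -/
theorem stmt_4 {G : Type*} [Group G] [Group.IsNilpotent G] {r : ℕ}
    (a : Fin r → G) (m : Fin r → ℕ)
    (hgen : Subgroup.closure (Set.range a) = ⊤)
    (hord : ∀ i, orderOf (a i) = m i) (hm : ∀ i, m i ≠ 0) :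
    Finite G ∧ ∃ k : ℕ, Nat.card G ∣ (∏ i, m i) ^ k := by
  have hn : (∏ i, m i) ≠ 0 := Finset.prod_ne_zero_iff.mpr fun i _ => hm i
  have hpow : ∀ x ∈ Set.range a, x ^ (∏ i, m i) = 1 := by
    rintro _ ⟨i, rfl⟩
    exact orderOf_dvd_iff_pow_eq_one.mp
      (by rw [hord i]; exact Finset.dvd_prod_of_mem m (Finset.mem_univ i))
  obtain ⟨k, h0, hdvd⟩ :=
    stmt_4_key (∏ i, m i) hn G (Set.range a) (Set.finite_range a) hgen hpow
  exact ⟨Nat.finite_of_card_ne_zero h0, k, hdvd⟩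
end

section
/- (Fitting's theorem) Let H and K be normal nilpotent subgroups of a group G, of nilpotency classes c and d respectively. Then the product HK (the subgroup generated by H and K) is nilpotent of class at most c + d. -/
open scoped commutatorElement

section FittingAux

variable {G : Type*} [Group G]

/-- Each term of the lower central series is characteristic. -/
lemma fitting_lcs_characteristic (n : ℕ) : (Subgroup.lowerCentralSeries (⊤ : Subgroup G) n).Characteristic := by
  induction n with
  | zero => exact Subgroup.topCharacteristic
  | succ n ih => exact @Subgroup.commutator_characteristic G _ _ ⊤ ih _

/-- Commutator with a closure is controlled by generators, for a normal target. -/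
lemma fitting_commutator_closure_right_le {A N : Subgroup G} [hN : N.Normal] (s : Set G)
    (h : ∀ a ∈ A, ∀ x ∈ s, ⁅a, x⁆ ∈ N) : ⁅A, Subgroup.closure s⁆ ≤ N := by
  rw [Subgroup.commutator_le]
  intro a ha x hx
  induction hx using Subgroup.closure_induction with
  | mem y hy => exact h a ha y hy
  | one => simpa using N.one_mem
  | mul y z hy hz ihy ihz =>
      have hid : ⁅a, y * z⁆ = ⁅a, y⁆ * (y * ⁅a, z⁆ * y⁻¹) := by
        simp only [commutatorElement_def]; group
      rw [hid]
      exact N.mul_mem ihy (hN.conj_mem _ ihz y)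
  | inv y hy ihy =>
      have hid : ⁅a, y⁻¹⁆ = y⁻¹ * ⁅a, y⁆⁻¹ * y := by
        simp only [commutatorElement_def]; group
      rw [hid]
      simpa using hN.conj_mem _ (N.inv_mem ihy) y⁻¹

lemma fitting_commutator_iSup_left_le {ι : Sort*} {f : ι → Subgroup G} {B N : Subgroup G}
    [N.Normal] (h : ∀ i, ⁅f i, B⁆ ≤ N) : ⁅(⨆ i, f i), B⁆ ≤ N := by
  rw [Subgroup.commutator_comm, Subgroup.iSup_eq_closure]
  apply fitting_commutator_closure_right_le
  intro b hb x hx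
  obtain ⟨i, hi⟩ := Set.mem_iUnion.mp hx
  have hmem : ⁅x, b⁆ ∈ N := h i (Subgroup.commutator_mem_commutator hi hb)
  have : ⁅b, x⁆ = ⁅x, b⁆⁻¹ := (commutatorElement_inv x b).symm
  rw [this]
  exact N.inv_mem hmem

lemma fitting_commutator_sup_right_le {A B C N : Subgroup G} [N.Normal]
    (hb : ⁅A, B⁆ ≤ N) (hc : ⁅A, C⁆ ≤ N) : ⁅A, B ⊔ C⁆ ≤ N := by
  have hBC : B ⊔ C = Subgroup.closure ((B : Set G) ∪ (C : Set G)) := by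
    rw [Subgroup.closure_union, Subgroup.closure_eq, Subgroup.closure_eq]
  rw [hBC]
  apply fitting_commutator_closure_right_le
  rintro a ha x (hx | hx)
  · exact hb (Subgroup.commutator_mem_commutator ha hx)
  · exact hc (Subgroup.commutator_mem_commutator ha hx)

lemma fitting_normal_iSup {ι : Sort*} (f : ι → Subgroup G) (h : ∀ i, (f i).Normal) :
    (⨆ i, f i).Normal := by
  constructor
  intro x hx g
  rw [Subgroup.iSup_eq_closure] at hx ⊢
  induction hx using Subgroup.closure_induction with
  | mem y hy =>
      obtain ⟨i, hi⟩ := Set.mem_iUnion.mp hy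
      exact Subgroup.subset_closure (Set.mem_iUnion.mpr ⟨i, (h i).conj_mem y hi g⟩)
  | one => simpa using Subgroup.one_mem _
  | mul y z _ _ ihy ihz =>
      have : g * (y * z) * g⁻¹ = (g * y * g⁻¹) * (g * z * g⁻¹) := by group
      rw [this]; exact mul_mem ihy ihz
  | inv y _ ihy =>
      have : g * y⁻¹ * g⁻¹ = (g * y * g⁻¹)⁻¹ := by group
      rw [this]; exact inv_mem ihy

/-- The "weight-indexed" lower central series of a subgroup, as subgroups of the ambient
group: `fittingMlcs H 0 = ⊤` and `fittingMlcs H (i+1)` is the image of the `i`-th term of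
the lower central series of `H`. -/
def fittingMlcs (H : Subgroup G) : ℕ → Subgroup G
  | 0 => ⊤
  | (i + 1) => (Subgroup.lowerCentralSeries (⊤ : Subgroup ↥H) i).map H.subtype

lemma fittingMlcs_zero (H : Subgroup G) : fittingMlcs H 0 = ⊤ := rfl

lemma fittingMlcs_one (H : Subgroup G) : fittingMlcs H 1 = H := by
  show (Subgroup.lowerCentralSeries (⊤ : Subgroup ↥H) 0).map H.subtype = H
  rw [lowerCentralSeries_zero, ← MonoidHom.range_eq_map, Subgroup.range_subtype]

lemma fittingMlcs_normal (H : Subgroup G) [H.Normal] (i : ℕ) : (fittingMlcs H i).Normal := by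
  cases i with
  | zero => rw [fittingMlcs_zero]; infer_instance
  | succ i =>
      haveI := fitting_lcs_characteristic (G := ↥H) i
      exact ConjAct.normal_of_characteristic_of_normal

lemma fitting_commutator_mlcs (H : Subgroup G) [H.Normal] (i : ℕ) :
    ⁅fittingMlcs H i, H⁆ ≤ fittingMlcs H (i + 1) := by
  cases i with
  | zero =>
      rw [fittingMlcs_one]
      exact Subgroup.commutator_le_right _ _
  | succ i =>
      show ⁅(Subgroup.lowerCentralSeries (⊤ : Subgroup ↥H) i).map H.subtype, H⁆ ≤
        (Subgroup.lowerCentralSeries (⊤ : Subgroup ↥H) (i + 1)).map H.subtype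
      have heq : Subgroup.lowerCentralSeries (⊤ : Subgroup ↥H) (i + 1) = ⁅Subgroup.lowerCentralSeries (⊤ : Subgroup ↥H) i, ⊤⁆ := rfl
      rw [heq, Subgroup.map_commutator, ← MonoidHom.range_eq_map, Subgroup.range_subtype]

lemma fittingMlcs_eq_bot (H : Subgroup G) {c i : ℕ} (h : Subgroup.lowerCentralSeries (⊤ : Subgroup ↥H) c = ⊥)
    (hi : c < i) : fittingMlcs H i = ⊥ := by
  obtain ⟨j, rfl⟩ : ∃ j, i = j + 1 := ⟨i - 1, by omega⟩
  show (Subgroup.lowerCentralSeries (⊤ : Subgroup ↥H) j).map H.subtype = ⊥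
  have hle : Subgroup.lowerCentralSeries (⊤ : Subgroup ↥H) j ≤ Subgroup.lowerCentralSeries (⊤ : Subgroup ↥H) c :=
    lowerCentralSeries_antitone _ (by omega)
  rw [h] at hle
  rw [le_bot_iff.mp hle, Subgroup.map_bot]

/-- The key inductive bound in Fitting's theorem. -/
lemma fitting_main (H K : Subgroup G) [H.Normal] [K.Normal] (n : ℕ) :
    (Subgroup.lowerCentralSeries (⊤ : Subgroup ↥(H ⊔ K)) n).map (H ⊔ K).subtype ≤
      ⨆ (i : ℕ) (_ : i ≤ n + 1), fittingMlcs H i ⊓ fittingMlcs K (n + 1 - i) := by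
  induction n with
  | zero =>
      have hmap : (Subgroup.lowerCentralSeries (⊤ : Subgroup ↥(H ⊔ K)) 0).map (H ⊔ K).subtype = H ⊔ K := by
        rw [lowerCentralSeries_zero, ← MonoidHom.range_eq_map, Subgroup.range_subtype]
      rw [hmap]
      apply sup_le
      · refine le_trans ?_ (le_iSup₂ (f := fun i (_ : i ≤ 0 + 1) =>
          fittingMlcs H i ⊓ fittingMlcs K (0 + 1 - i)) 1 (by norm_num))
        simp [fittingMlcs_one, fittingMlcs_zero]
      · refine le_trans ?_ (le_iSup₂ (f := fun i (_ : i ≤ 0 + 1) =>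
          fittingMlcs H i ⊓ fittingMlcs K (0 + 1 - i)) 0 (by norm_num))
        simp [fittingMlcs_one, fittingMlcs_zero]
  | succ n ih =>
      haveI hNormal : (⨆ (i : ℕ) (_ : i ≤ n + 1 + 1),
          fittingMlcs H i ⊓ fittingMlcs K (n + 1 + 1 - i)).Normal := by
        apply fitting_normal_iSup
        intro i
        apply fitting_normal_iSup
        intro _
        haveI := fittingMlcs_normal H i
        haveI := fittingMlcs_normal K (n + 1 + 1 - i)
        infer_instance
      have hmap : (Subgroup.lowerCentralSeries (⊤ : Subgroup ↥(H ⊔ K)) (n + 1)).map (H ⊔ K).subtype =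
          ⁅(Subgroup.lowerCentralSeries (⊤ : Subgroup ↥(H ⊔ K)) n).map (H ⊔ K).subtype, H ⊔ K⁆ := by
        have heq : Subgroup.lowerCentralSeries (⊤ : Subgroup ↥(H ⊔ K)) (n + 1) =
            ⁅Subgroup.lowerCentralSeries (⊤ : Subgroup ↥(H ⊔ K)) n, ⊤⁆ := rfl
        rw [heq, Subgroup.map_commutator, ← MonoidHom.range_eq_map, Subgroup.range_subtype]
      rw [hmap]
      apply fitting_commutator_sup_right_le
      · refine le_trans (Subgroup.commutator_mono ih le_rfl) ?_
        apply fitting_commutator_iSup_left_le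
        intro i
        apply fitting_commutator_iSup_left_le
        intro hi
        haveI := fittingMlcs_normal H i
        haveI := fittingMlcs_normal K (n + 1 - i)
        have h1 : ⁅fittingMlcs H i ⊓ fittingMlcs K (n + 1 - i), H⁆ ≤ fittingMlcs H (i + 1) :=
          le_trans (Subgroup.commutator_mono inf_le_left le_rfl) (fitting_commutator_mlcs H i)
        have h2 : ⁅fittingMlcs H i ⊓ fittingMlcs K (n + 1 - i), H⁆ ≤ fittingMlcs K (n + 1 - i) :=
          le_trans (Subgroup.commutator_le_left _ _) inf_le_right
        refine le_trans (le_inf h1 h2) (le_trans ?_ (le_iSup₂ (f := fun j (_ : j ≤ n + 1 + 1) =>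
          fittingMlcs H j ⊓ fittingMlcs K (n + 1 + 1 - j)) (i + 1) (by omega)))
        have : n + 1 + 1 - (i + 1) = n + 1 - i := by omega
        rw [this]
      · refine le_trans (Subgroup.commutator_mono ih le_rfl) ?_
        apply fitting_commutator_iSup_left_le
        intro i
        apply fitting_commutator_iSup_left_le
        intro hi
        haveI := fittingMlcs_normal H i
        haveI := fittingMlcs_normal K (n + 1 - i)
        have h1 : ⁅fittingMlcs H i ⊓ fittingMlcs K (n + 1 - i), K⁆ ≤
            fittingMlcs K (n + 1 - i + 1) :=
          le_trans (Subgroup.commutator_mono inf_le_right le_rfl)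
            (fitting_commutator_mlcs K (n + 1 - i))
        have h2 : ⁅fittingMlcs H i ⊓ fittingMlcs K (n + 1 - i), K⁆ ≤ fittingMlcs H i :=
          le_trans (Subgroup.commutator_le_left _ _) inf_le_left
        refine le_trans (le_inf h2 h1) (le_trans ?_ (le_iSup₂ (f := fun j (_ : j ≤ n + 1 + 1) =>
          fittingMlcs H j ⊓ fittingMlcs K (n + 1 + 1 - j)) i (by omega)))
        have : n + 1 + 1 - i = n + 1 - i + 1 := by omega
        rw [this]

end FittingAux

/-- (Fitting's theorem) If `H` and `K` are normal nilpotent subgroups of `G` of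
nilpotency classes `c` and `d` respectively, then `HK = H ⊔ K` is nilpotent of
class at most `c + d`. -/
theorem stmt_5 {G : Type*} [Group G] (H K : Subgroup G) [H.Normal] [K.Normal]
    [hH : Group.IsNilpotent ↥H] [hK : Group.IsNilpotent ↥K] {c d : ℕ}
    (hc : Group.nilpotencyClass ↥H = c) (hd : Group.nilpotencyClass ↥K = d) :
    ∃ hHK : Group.IsNilpotent ↥(H ⊔ K),
      Group.nilpotencyClass ↥(H ⊔ K) ≤ c + d := by
  have hHb : Subgroup.lowerCentralSeries (⊤ : Subgroup ↥H) c = ⊥ := by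
    rw [← hc]; exact lowerCentralSeries_nilpotencyClass
  have hKb : Subgroup.lowerCentralSeries (⊤ : Subgroup ↥K) d = ⊥ := by
    rw [← hd]; exact lowerCentralSeries_nilpotencyClass
  have hS : (⨆ (i : ℕ) (_ : i ≤ c + d + 1), fittingMlcs H i ⊓ fittingMlcs K (c + d + 1 - i))
      ≤ ⊥ := by
    refine iSup₂_le fun i hi => ?_
    rcases lt_or_ge c i with h | h
    · rw [fittingMlcs_eq_bot H hHb h]
      exact inf_le_left
    · rw [fittingMlcs_eq_bot K hKb (by omega)]
      exact inf_le_right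
  have hmb : (Subgroup.lowerCentralSeries (⊤ : Subgroup ↥(H ⊔ K)) (c + d)).map (H ⊔ K).subtype = ⊥ :=
    le_bot_iff.mp (le_trans (fitting_main H K (c + d)) hS)
  have hbot : Subgroup.lowerCentralSeries (⊤ : Subgroup ↥(H ⊔ K)) (c + d) = ⊥ := by
    rwa [Subgroup.map_eq_bot_iff_of_injective _ (Subgroup.subtype_injective _)] at hmb
  have hNil : Group.IsNilpotent ↥(H ⊔ K) := nilpotent_iff_lowerCentralSeries.mpr ⟨_, hbot⟩
  exact ⟨hNil, lowerCentralSeries_eq_bot_iff_nilpotencyClass_le.mp hbot⟩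
end

section
/- (McLain) Let G be a locally nilpotent group, i.e. every finitely generated subgroup of G is nilpotent. Then every maximal subgroup of G is normal in G. -/
/-- A group is locally nilpotent if every finitely generated subgroup is nilpotent. -/
def LocallyNilpotent (G : Type*) [Group G] : Prop :=
  ∀ H : Subgroup G, H.FG → Group.IsNilpotent ↥H

open scoped commutatorElement

section Aux

variable {G : Type*} [Group G]

theorem comm_mul_center_left' (a b z : G)
    (hz : z ∈ Subgroup.center G) : ⁅a * z, b⁆ = ⁅a, b⁆ := by
  have hzb : z * b = b * z := (Subgroup.mem_center_iff.mp hz b).symm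
  calc ⁅a * z, b⁆ = a * (z * b * z⁻¹) * a⁻¹ * b⁻¹ := by
        rw [commutatorElement_def]; group
    _ = a * (b * z * z⁻¹) * a⁻¹ * b⁻¹ := by rw [hzb]
    _ = ⁅a, b⁆ := by rw [commutatorElement_def]; group

theorem comm_mul_center_right' (a b w : G)
    (hw : w ∈ Subgroup.center G) : ⁅a, b * w⁆ = ⁅a, b⁆ := by
  rw [← commutatorElement_inv, comm_mul_center_left' b a w hw, commutatorElement_inv]

theorem commutator_le_self' (H : Subgroup G) : ⁅H, H⁆ ≤ H :=
  Subgroup.commutator_le.mpr fun g₁ h₁ g₂ h₂ => by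
    rw [commutatorElement_def]
    exact H.mul_mem (H.mul_mem (H.mul_mem h₁ h₂) (H.inv_mem h₁)) (H.inv_mem h₂)

/-- In a nilpotent group, a subgroup together with the commutator subgroup generating
the whole group must itself be the whole group. -/
theorem eq_top_of_sup_commutator_eq_top :
    ∀ (n : ℕ) (G : Type*) [Group G] [Group.IsNilpotent G],
      Group.nilpotencyClass G ≤ n → ∀ H : Subgroup G, H ⊔ commutator G = ⊤ → H = ⊤ := by
  intro n
  induction n with
  | zero =>
    intro G _ _ hc H _
    have hs : Subsingleton G := nilpotencyClass_zero_iff_subsingleton.mp (Nat.le_zero.mp hc)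
    refine (Subgroup.eq_top_iff' H).mpr fun x => ?_
    have : x = 1 := Subsingleton.elim x 1
    rw [this]; exact H.one_mem
  | succ n ih =>
    intro G _ _ hc H hH
    set Z := Subgroup.center G with hZ
    let π := QuotientGroup.mk' Z
    have hq : Group.nilpotencyClass (G ⧸ Z) ≤ n := by
      rw [nilpotencyClass_quotient_center]; omega
    have hmap : Subgroup.map π H = ⊤ := by
      apply ih _ hq
      have hcq : commutator (G ⧸ Z) = Subgroup.map π (commutator G) := by
        rw [commutator_def, commutator_def, Subgroup.map_commutator,
          Subgroup.map_top_of_surjective π (QuotientGroup.mk'_surjective Z)]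
      rw [hcq, ← Subgroup.map_sup, hH,
        Subgroup.map_top_of_surjective π (QuotientGroup.mk'_surjective Z)]
    have hsupZ : H ⊔ Z = ⊤ := by
      have h1 : Subgroup.comap π (Subgroup.map π H) = H ⊔ π.ker := Subgroup.comap_map_eq π H
      rw [hmap, Subgroup.comap_top, QuotientGroup.ker_mk'] at h1
      exact h1.symm
    have hcle : commutator G ≤ H := by
      rw [commutator_def]
      rw [Subgroup.commutator_le]
      intro g₁ _ g₂ _
      have hg₁ : g₁ ∈ H ⊔ Z := hsupZ ▸ Subgroup.mem_top g₁
      have hg₂ : g₂ ∈ H ⊔ Z := hsupZ ▸ Subgroup.mem_top g₂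
      rw [← SetLike.mem_coe, Subgroup.mul_normal H Z] at hg₁ hg₂
      obtain ⟨h₁, hh₁, z₁, hz₁, rfl⟩ := hg₁
      obtain ⟨h₂, hh₂, z₂, hz₂, rfl⟩ := hg₂
      rw [comm_mul_center_left' _ _ _ hz₁, comm_mul_center_right' _ _ _ hz₂,
        commutatorElement_def]
      exact H.mul_mem (H.mul_mem (H.mul_mem hh₁ hh₂) (H.inv_mem hh₁)) (H.inv_mem hh₂)
    rw [← hH, sup_eq_left.mpr hcle]

theorem exists_finset_of_mem_closure' {s : Set G} {x : G} (hx : x ∈ Subgroup.closure s) :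
    ∃ F : Finset G, ↑F ⊆ s ∧ x ∈ Subgroup.closure (F : Set G) := by
  classical
  refine Subgroup.closure_induction (fun y hy => ?_) ?_ ?_ ?_ hx
  · exact ⟨{y}, by simpa using hy, Subgroup.subset_closure (by simp)⟩
  · exact ⟨∅, by simp, Subgroup.one_mem _⟩
  · rintro y z - - ⟨A, hAs, hyA⟩ ⟨B, hBs, hzB⟩
    refine ⟨A ∪ B, by rw [Finset.coe_union]; exact Set.union_subset hAs hBs,
      Subgroup.mul_mem _ ?_ ?_⟩
    · exact Subgroup.closure_mono (Finset.coe_subset.mpr Finset.subset_union_left) hyA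
    · exact Subgroup.closure_mono (Finset.coe_subset.mpr Finset.subset_union_right) hzB
  · rintro y - ⟨A, hAs, hyA⟩
    exact ⟨A, hAs, Subgroup.inv_mem _ hyA⟩

theorem exists_finset_commutator {x : G} (hx : x ∈ commutator G) :
    ∃ A : Finset G,
      x ∈ ⁅Subgroup.closure (A : Set G), Subgroup.closure (A : Set G)⁆ := by
  classical
  rw [commutator_def, Subgroup.commutator_def] at hx
  refine Subgroup.closure_induction (fun y hy => ?_) ?_ ?_ ?_ hx
  · obtain ⟨a, -, b, -, rfl⟩ := hy
    exact ⟨{a, b}, Subgroup.commutator_mem_commutator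
      (Subgroup.subset_closure (by simp)) (Subgroup.subset_closure (by simp))⟩
  · exact ⟨∅, Subgroup.one_mem _⟩
  · rintro y z - - ⟨A, hyA⟩ ⟨B, hzB⟩
    refine ⟨A ∪ B, Subgroup.mul_mem _ ?_ ?_⟩
    · exact Subgroup.commutator_mono
        (Subgroup.closure_mono (Finset.coe_subset.mpr Finset.subset_union_left))
        (Subgroup.closure_mono (Finset.coe_subset.mpr Finset.subset_union_left)) hyA
    · exact Subgroup.commutator_mono
        (Subgroup.closure_mono (Finset.coe_subset.mpr Finset.subset_union_right))
        (Subgroup.closure_mono (Finset.coe_subset.mpr Finset.subset_union_right)) hzB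
  · rintro y - ⟨A, hyA⟩
    exact ⟨A, Subgroup.inv_mem _ hyA⟩

end Aux

/-- (McLain) Every maximal subgroup of a locally nilpotent group is normal. -/
theorem stmt_8 {G : Type*} [Group G] (hG : LocallyNilpotent G)
    (M : Subgroup G) (hM : IsCoatom M) : M.Normal := by
  suffices hcomm : commutator G ≤ M by
    constructor
    intro m hm g
    have h1 : ⁅g, m⁆ ∈ M := by
      apply hcomm
      rw [commutator_def]
      exact Subgroup.commutator_mem_commutator (Subgroup.mem_top g) (Subgroup.mem_top m)
    have h2 : g * m * g⁻¹ = ⁅g, m⁆ * m := by rw [commutatorElement_def]; group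
    rw [h2]
    exact M.mul_mem h1 hm
  by_contra hnc
  obtain ⟨g, hgc, hgM⟩ := SetLike.not_le_iff_exists.mp hnc
  obtain ⟨A, hgA⟩ := exists_finset_commutator hgc
  -- M together with g generates G
  have htop : M ⊔ Subgroup.closure {g} = ⊤ := by
    apply hM.2
    refine left_lt_sup.mpr fun hle => hgM (hle (Subgroup.subset_closure rfl))
  -- every element of A is generated by finitely many elements of M together with g
  have hmemA : ∀ a : G, a ∈ A → ∃ F : Finset G, ↑F ⊆ (M : Set G) ∪ {g} ∧
      a ∈ Subgroup.closure (F : Set G) := by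
    intro a _
    apply exists_finset_of_mem_closure'
    rw [Subgroup.closure_union, Subgroup.closure_eq, htop]
    exact Subgroup.mem_top a
  choose! F hFsub hFmem using hmemA
  -- the set of M-elements involved
  set S : Set G := (⋃ a ∈ (A : Set G), (F a : Set G)) ∩ M with hS
  have hSfin : S.Finite :=
    Set.Finite.inter_of_left (A.finite_toSet.biUnion fun a _ => (F a).finite_toSet) _
  have hSM : S ⊆ (M : Set G) := Set.inter_subset_right
  -- the key finitely generated subgroup
  set K : Subgroup G := Subgroup.closure (S ∪ (A : Set G) ∪ {g}) with hK
  have hKfg : K.FG := (Subgroup.fg_iff K).mpr ⟨_, rfl,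
    ((hSfin.union A.finite_toSet).union (Set.finite_singleton g))⟩
  have hnilp : Group.IsNilpotent ↥K := hG K hKfg
  have hAK : Subgroup.closure (A : Set G) ≤ K :=
    Subgroup.closure_mono (fun x hx => Or.inl (Or.inr hx))
  have hgK' : g ∈ ⁅K, K⁆ := Subgroup.commutator_mono hAK hAK hgA
  have hgK : g ∈ K := Subgroup.subset_closure (Or.inr rfl)
  have hclSK : Subgroup.closure S ≤ K :=
    Subgroup.closure_mono (fun x hx => Or.inl (Or.inl hx))
  -- K = ⟨S⟩ ⊔ [K,K]
  have hKsup : Subgroup.closure S ⊔ ⁅K, K⁆ = K := by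
    apply le_antisymm (sup_le hclSK (commutator_le_self' K))
    rw [hK, Subgroup.closure_le]
    rintro x ((hx | hx) | hx)
    · exact Subgroup.mem_sup_left (Subgroup.subset_closure hx)
    · -- x ∈ A
      have hx1 : x ∈ Subgroup.closure (F x : Set G) := hFmem x hx
      have hx2 : (F x : Set G) ⊆ S ∪ {g} := by
        intro y hy
        rcases hFsub x hx hy with hyM | hyg
        · exact Or.inl ⟨Set.mem_biUnion hx hy, hyM⟩
        · exact Or.inr hyg
      have hx3 : x ∈ Subgroup.closure (S ∪ {g}) := Subgroup.closure_mono hx2 hx1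
      rw [Subgroup.closure_union] at hx3
      refine SetLike.le_def.mp (sup_le_sup_left ?_ _) hx3
      rw [Subgroup.closure_le]
      intro y hy
      rw [Set.mem_singleton_iff] at hy
      subst hy
      exact hgK'
    · rw [Set.mem_singleton_iff] at hx
      subst hx
      exact Subgroup.mem_sup_right hgK'
  -- move to the subgroup K, which is nilpotent
  have hT : (Subgroup.closure S).subgroupOf K ⊔ commutator ↥K = ⊤ := by
    apply Subgroup.map_injective (K.subtype_injective)
    rw [Subgroup.map_sup, Subgroup.subgroupOf_map_subtype, inf_of_le_left hclSK,
      commutator_def, Subgroup.map_commutator]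
    have h1 : Subgroup.map K.subtype ⊤ = K := by
      rw [← MonoidHom.range_eq_map, Subgroup.range_subtype]
    rw [h1, hKsup]
  have hTtop := eq_top_of_sup_commutator_eq_top (Group.nilpotencyClass ↥K) ↥K le_rfl _ hT
  rw [Subgroup.subgroupOf_eq_top] at hTtop
  have : g ∈ M := (Subgroup.closure_le M).mpr hSM (hTtop hgK)
  exact hgM this
end

section
/- (Hirsch) Let H and K be normal subgroups of a group G, each of which is locally nilpotent, i.e. every finitely generated subgroup of H is nilpotent and every finitely generated subgroup of K is nilpotent. Then the product HK is also locally nilpotent. -/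
open scoped Pointwise commutatorElement

namespace HirschPlotkinAux

open Subgroup hiding lowerCentralSeries lowerCentralSeries_one nilpotent_iff_lowerCentralSeries

variable {G : Type*} [Group G]

lemma comm_mul_left (a b v : G) : ⁅a * b, v⁆ = a * ⁅b, v⁆ * a⁻¹ * ⁅a, v⁆ := by
  simp only [commutatorElement_def]; group

lemma comm_inv_left (a v : G) : ⁅a⁻¹, v⁆ = a⁻¹ * ⁅a, v⁆⁻¹ * a := by
  simp only [commutatorElement_def]; group

lemma comm_mul_right (x a b : G) : ⁅x, a * b⁆ = ⁅x, a⁆ * (a * ⁅x, b⁆ * a⁻¹) := by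
  simp only [commutatorElement_def]; group

lemma comm_inv_right (x a : G) : ⁅x, a⁻¹⁆ = a⁻¹ * ⁅x, a⁆⁻¹ * a := by
  simp only [commutatorElement_def]; group

lemma fg_closure_finite {s : Set G} (hs : s.Finite) : (Subgroup.closure s).FG :=
  ⟨hs.toFinset, by rw [Set.Finite.coe_toFinset]⟩

lemma fg_sup {A B : Subgroup G} (hA : A.FG) (hB : B.FG) : (A ⊔ B).FG := by
  classical
  obtain ⟨Sf, rfl⟩ := hA
  obtain ⟨T, rfl⟩ := hB
  exact ⟨Sf ∪ T, by rw [Finset.coe_union, Subgroup.closure_union]⟩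

lemma fg_map {N : Type*} [Group N] {A : Subgroup G} (f : G →* N) (hA : A.FG) : (A.map f).FG := by
  classical
  obtain ⟨Sf, rfl⟩ := hA
  exact ⟨Sf.image f, by rw [Finset.coe_image, MonoidHom.map_closure]⟩

lemma group_fg_of_mulEquiv {M N : Type*} [Group M] [Group N] (e : M ≃* N) (h : Group.FG M) :
    Group.FG N :=
  @Group.fg_of_surjective M _ N _ h e.toMonoidHom e.surjective

lemma fg_subgroupOf {A B : Subgroup G} (hA : A.FG) (hle : A ≤ B) : (A.subgroupOf B).FG := by
  rw [← Group.fg_iff_subgroup_fg]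
  exact group_fg_of_mulEquiv (Subgroup.subgroupOfEquivOfLe hle).symm
    ((Group.fg_iff_subgroup_fg A).mpr hA)

lemma comm_mem_inf {H K : Subgroup G} [H.Normal] [K.Normal] {h k : G} (hh : h ∈ H)
    (hk : k ∈ K) : ⁅h, k⁆ ∈ H ⊓ K := by
  rw [Subgroup.mem_inf]
  constructor
  · have : ⁅h, k⁆ = h * (k * h⁻¹ * k⁻¹) := by simp only [commutatorElement_def]; group
    rw [this]
    exact mul_mem hh (‹H.Normal›.conj_mem _ (inv_mem hh) k)
  · have : ⁅h, k⁆ = (h * k * h⁻¹) * k⁻¹ := by simp only [commutatorElement_def, mul_assoc]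
    rw [this]
    exact mul_mem (‹K.Normal›.conj_mem _ hk h) (inv_mem hk)

/-! ### Normality of closures -/

lemma normal_closure_of {s : Set G} (h : ∀ x ∈ s, ∀ g : G, g * x * g⁻¹ ∈ Subgroup.closure s) :
    (Subgroup.closure s).Normal := by
  constructor
  intro n hn g
  induction hn using closure_induction with
  | mem x hx => exact h x hx g
  | one => simpa using (Subgroup.closure s).one_mem
  | mul x y hx hy px py =>
    have hmm := mul_mem px py
    have : g * x * g⁻¹ * (g * y * g⁻¹) = g * (x * y) * g⁻¹ := by group
    rwa [this] at hmm
  | inv x hx px =>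
    have hmm := inv_mem px
    have : (g * x * g⁻¹)⁻¹ = g * x⁻¹ * g⁻¹ := by group
    rwa [this] at hmm

/-! ### Iterated commutator generating sets for the lower central series -/

variable (S : Set G)

def commSet : ℕ → Set G
  | 0 => S
  | n + 1 => (fun p : G × G => ⁅p.1, p.2⁆) '' ((commSet n) ×ˢ S)

lemma commSet_finite (hS : S.Finite) : ∀ n, (commSet S n).Finite
  | 0 => hS
  | n + 1 => ((commSet_finite hS n).prod hS).image _

lemma commSet_subset_lcs : ∀ n, ∀ x ∈ commSet S n, x ∈ (⊤ : Subgroup G).lowerCentralSeries n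
  | 0 => fun x _ => Subgroup.mem_top x
  | n + 1 => by
    rintro x ⟨⟨c, s⟩, hmem, rfl⟩
    obtain ⟨hc, hs⟩ := Set.mem_prod.mp hmem
    exact Subgroup.commutator_mem_commutator (commSet_subset_lcs n c hc) (Subgroup.mem_top s)

lemma lcs_le_closure_commSet (hS : Subgroup.closure S = ⊤) (n : ℕ) :
    (⊤ : Subgroup G).lowerCentralSeries n ≤
      Subgroup.closure (commSet S n) ⊔ (⊤ : Subgroup G).lowerCentralSeries (n + 1) := by
  induction n with
  | zero =>
    refine le_sup_of_le_left ?_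
    rw [show commSet S 0 = S from rfl, hS]
    exact le_top
  | succ n ih =>
    set T : Subgroup G :=
      Subgroup.closure (commSet S (n + 1)) ⊔ (⊤ : Subgroup G).lowerCentralSeries (n + 2) with hT
    have hTclos : T = Subgroup.closure (commSet S (n + 1) ∪ ((⊤ : Subgroup G).lowerCentralSeries (n + 2) : Set G)) := by
      rw [Subgroup.closure_union, Subgroup.closure_eq]
    have hTnormal : T.Normal := by
      rw [hTclos]
      apply normal_closure_of
      intro x hx g
      rcases hx with hx | hx
      · have hxl : x ∈ (⊤ : Subgroup G).lowerCentralSeries (n + 1) := commSet_subset_lcs S (n + 1) x hx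
        have h1 : g * x * g⁻¹ = x * ⁅x⁻¹, g⁆ := by
          simp only [commutatorElement_def]; group
        rw [h1]
        refine mul_mem (Subgroup.subset_closure (Or.inl hx)) (Subgroup.subset_closure (Or.inr ?_))
        exact Subgroup.commutator_mem_commutator (inv_mem hxl) (Subgroup.mem_top g)
      · exact Subgroup.subset_closure (Or.inr ((show ((⊤ : Subgroup G).lowerCentralSeries (n + 2)).Normal from inferInstance).conj_mem x hx g))
    -- the subgroup of elements a with ∀ g, ⁅a, g⁆ ∈ T
    set A : Subgroup G :=
      { carrier := { a : G | ∀ g : G, ⁅a, g⁆ ∈ T }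
        one_mem' := by
          intro g
          simpa only [commutatorElement_one_left] using T.one_mem
        mul_mem' := by
          intro a b pa pb g
          rw [comm_mul_left]
          exact mul_mem (hTnormal.conj_mem _ (pb g) a) (pa g)
        inv_mem' := by
          intro a pa g
          rw [comm_inv_left]
          have := hTnormal.conj_mem _ (inv_mem (pa g)) a⁻¹
          simpa only [mul_assoc, inv_inv] using this } with hA
    have hAmem : ∀ a : G, a ∈ A ↔ ∀ g : G, ⁅a, g⁆ ∈ T := fun a => Iff.rfl
    -- commSet S n ⊆ A
    have hcommA : ∀ c ∈ commSet S n, c ∈ A := by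
      intro c hc
      rw [hAmem]
      intro g
      -- the subgroup of g with ⁅c, g⁆ ∈ T contains S, hence is everything
      set B : Subgroup G :=
        { carrier := { g : G | ⁅c, g⁆ ∈ T }
          one_mem' := by
            show ⁅c, (1 : G)⁆ ∈ T
            simpa only [commutatorElement_one_right] using T.one_mem
          mul_mem' := by
            intro x y px py
            show ⁅c, x * y⁆ ∈ T
            rw [comm_mul_right]
            exact mul_mem px (hTnormal.conj_mem _ py x)
          inv_mem' := by
            intro x px
            show ⁅c, x⁻¹⁆ ∈ T
            rw [comm_inv_right]
            have := hTnormal.conj_mem _ (inv_mem px) x⁻¹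
            simpa only [mul_assoc, inv_inv] using this } with hB
      have hSB : S ⊆ (B : Set G) := by
        intro s hs
        show ⁅c, s⁆ ∈ T
        refine le_sup_left (α := Subgroup G) ?_
        exact Subgroup.subset_closure ⟨(c, s), Set.mem_prod.mpr ⟨hc, hs⟩, rfl⟩
      have : (⊤ : Subgroup G) ≤ B := by
        rw [← hS]
        exact Subgroup.closure_le B |>.mpr hSB
      exact this (Subgroup.mem_top g)
    -- lcs (n+1) ⊆ A
    have hlcsA : (⊤ : Subgroup G).lowerCentralSeries (n + 1) ≤ A := by
      intro a ha
      rw [hAmem]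
      intro g
      exact le_sup_right (α := Subgroup G)
        (Subgroup.commutator_mem_commutator ha (Subgroup.mem_top g))
    have hlcsnA : (⊤ : Subgroup G).lowerCentralSeries n ≤ A := by
      refine (ih.trans ?_)
      refine sup_le ?_ hlcsA
      exact Subgroup.closure_le A |>.mpr hcommA
    -- conclude
    show ⁅(⊤ : Subgroup G).lowerCentralSeries n, (⊤ : Subgroup G)⁆ ≤ T
    rw [Subgroup.commutator_le]
    intro a ha g _
    exact (hlcsnA ha) g

lemma lcs_eq_closure_sup (hS : Subgroup.closure S = ⊤) (n : ℕ) :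
    (⊤ : Subgroup G).lowerCentralSeries n =
      Subgroup.closure (commSet S n) ⊔ (⊤ : Subgroup G).lowerCentralSeries (n + 1) := by
  refine le_antisymm (lcs_le_closure_commSet S hS n) (sup_le ?_ ?_)
  · exact Subgroup.closure_le _ |>.mpr (commSet_subset_lcs S n)
  · exact Subgroup.lowerCentralSeries_antitone ⊤ (Nat.le_succ n)

lemma fg_bot : (⊥ : Subgroup G).FG := ⟨∅, by simp⟩

lemma lcs_fg [Group.FG G] {c : ℕ} (hc : (⊤ : Subgroup G).lowerCentralSeries c = ⊥) (n : ℕ) :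
    ((⊤ : Subgroup G).lowerCentralSeries n).FG := by
  obtain ⟨Sf, hSf⟩ := Group.fg_def.mp ‹Group.FG G›
  have key : ∀ k, ((⊤ : Subgroup G).lowerCentralSeries (c - k)).FG := by
    intro k
    induction k with
    | zero => rw [Nat.sub_zero, hc]; exact fg_bot
    | succ k ih =>
      by_cases h : c ≤ k
      · have : c - (k + 1) = c - k := by omega
        rw [this]; exact ih
      · have h2 : c - k = (c - (k + 1)) + 1 := by omega
        rw [lcs_eq_closure_sup (Sf : Set G) hSf (c - (k + 1))]
        refine fg_sup (fg_closure_finite (commSet_finite _ (Sf.finite_toSet) _)) ?_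
        rw [← h2]; exact ih
  by_cases h : n ≤ c
  · have := key (c - n)
    rwa [Nat.sub_sub_self h] at this
  · have hb : (⊤ : Subgroup G).lowerCentralSeries n = ⊥ := by
      have := Subgroup.lowerCentralSeries_antitone (⊤ : Subgroup G) (le_of_lt (not_le.mp h))
      rw [hc] at this
      exact le_bot_iff.mp this
    rw [hb]; exact fg_bot

/-! ### Max for abelian f.g. groups -/

lemma comm_max {A : Type*} [Group A] (hcomm : ∀ a b : A, a * b = b * a) (hfg : Group.FG A)
    (P : Subgroup A) : P.FG := by
  letI : CommGroup A := { ‹Group A› with mul_comm := hcomm }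
  haveI : Group.FG A := hfg
  haveI h1 : Module.Finite ℤ (Additive A) := Module.Finite.iff_addGroup_fg.mpr inferInstance
  haveI h2 : IsNoetherian ℤ (Additive A) := isNoetherian_of_isNoetherianRing_of_finite ℤ (Additive A)
  rw [Subgroup.fg_iff_add_fg]
  have h3 := IsNoetherian.noetherian (AddSubgroup.toIntSubmodule (Subgroup.toAddSubgroup P))
  rw [Submodule.fg_iff_addSubgroup_fg] at h3
  exact h3

/-! ### Max is closed under extensions -/

lemma group_fg_of_normal (N : Subgroup G) [N.Normal] (h1 : N.FG) (h2 : Group.FG (G ⧸ N)) :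
    Group.FG G := by
  classical
  obtain ⟨Sf, hSf⟩ := h1
  obtain ⟨T, hT⟩ := Group.fg_def.mp h2
  set U : Finset G := T.image Quotient.out with hU
  rw [Group.fg_def]
  refine ⟨Sf ∪ U, ?_⟩
  set Hc : Subgroup G := Subgroup.closure ↑(Sf ∪ U) with hHc
  have hNHc : N ≤ Hc := by
    rw [← hSf]
    refine Subgroup.closure_mono ?_
    intro x hx; exact Finset.coe_subset.mpr Finset.subset_union_left hx
  have hmap : Hc.map (QuotientGroup.mk' N) = ⊤ := by
    rw [eq_top_iff, ← hT]
    refine Subgroup.closure_le _ |>.mpr ?_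
    intro t ht
    refine Subgroup.mem_map.mpr ⟨Quotient.out t, ?_, ?_⟩
    · refine Subgroup.subset_closure ?_
      refine Finset.coe_subset.mpr Finset.subset_union_right ?_
      exact Finset.mem_image_of_mem _ ht
    · exact Quotient.out_eq t
  have := Subgroup.comap_map_eq (QuotientGroup.mk' N) Hc
  rw [hmap, QuotientGroup.ker_mk'] at this
  have h4 : Subgroup.comap (QuotientGroup.mk' N) ⊤ = ⊤ := rfl
  rw [h4] at this
  rw [eq_top_iff, this]
  exact sup_le le_rfl hNHc

lemma max_ext (N : Subgroup G) [N.Normal]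
    (h1 : ∀ P : Subgroup ↥N, P.FG) (h2 : ∀ P : Subgroup (G ⧸ N), P.FG)
    (P : Subgroup G) : P.FG := by
  rw [← Group.fg_iff_subgroup_fg]
  set φ : ↥P →* G ⧸ N := (QuotientGroup.mk' N).comp P.subtype with hφ
  have hker : φ.ker = N.subgroupOf P := by
    rw [hφ, ← MonoidHom.comap_ker, QuotientGroup.ker_mk']
    rfl
  haveI : φ.ker.Normal := MonoidHom.normal_ker φ
  apply group_fg_of_normal φ.ker
  · -- φ.ker is finitely generated
    have hfgNP : (N ⊓ P).FG := by
      have ha := h1 ((N ⊓ P).subgroupOf N)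
      have hb := fg_map N.subtype ha
      rwa [Subgroup.subgroupOf_map_subtype, inf_of_le_left inf_le_left] at hb
    have heq : N.subgroupOf P = (N ⊓ P).subgroupOf P := by
      ext x
      simp [Subgroup.mem_subgroupOf, x.2]
    rw [hker, heq]
    exact fg_subgroupOf hfgNP inf_le_right
  · -- the quotient is finitely generated
    have hr : Group.FG ↥φ.range := by
      rw [Group.fg_iff_subgroup_fg]
      have : φ.range = P.map (QuotientGroup.mk' N) := by
        rw [hφ, MonoidHom.range_comp, Subgroup.range_subtype]
      rw [this]
      exact h2 _
    exact group_fg_of_mulEquiv (QuotientGroup.quotientKerEquivRange φ).symm hr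

/-! ### Ambient lower central series of a subgroup -/

def gseries (A : Subgroup G) : ℕ → Subgroup G
  | 0 => A
  | n + 1 => ⁅gseries A n, A⁆

lemma gseries_normal (A : Subgroup G) [A.Normal] : ∀ n, (gseries A n).Normal
  | 0 => ‹A.Normal›
  | n + 1 => @Subgroup.commutator_normal _ _ (gseries A n) A (gseries_normal A n) ‹A.Normal›

lemma gseries_le_self (A : Subgroup G) [A.Normal] : ∀ n, gseries A (n + 1) ≤ gseries A n := by
  intro n
  haveI := gseries_normal A n
  exact Subgroup.commutator_le_left _ _

lemma gseries_bot_of_ge (A : Subgroup G) {a : ℕ} (ha : gseries A a = ⊥) :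
    ∀ m, a ≤ m → gseries A m = ⊥ := by
  intro m hm
  induction m with
  | zero => rw [Nat.le_zero.mp hm] at ha; exact ha
  | succ m ih =>
    rcases Nat.lt_or_ge a (m + 1) with h | h
    · have hb := ih (by omega)
      show ⁅gseries A m, A⁆ = ⊥
      rw [hb]
      exact Subgroup.commutator_bot_left A
    · rw [Nat.le_antisymm hm h] at ha; exact ha

lemma map_lcs_subtype (A : Subgroup G) (n : ℕ) :
    ((⊤ : Subgroup ↥A).lowerCentralSeries n).map A.subtype = gseries A n := by
  induction n with
  | zero =>
    show Subgroup.map A.subtype ⊤ = A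
    rw [← MonoidHom.range_eq_map, Subgroup.range_subtype]
  | succ n ih =>
    show Subgroup.map A.subtype ⁅(⊤ : Subgroup ↥A).lowerCentralSeries n, ⊤⁆ = ⁅gseries A n, A⁆
    rw [Subgroup.map_commutator, ih]
    congr 1
    rw [← MonoidHom.range_eq_map, Subgroup.range_subtype]

lemma isNilpotent_iff_gseries (A : Subgroup G) :
    Group.IsNilpotent ↥A ↔ ∃ n, gseries A n = ⊥ := by
  rw [nilpotent_iff_lowerCentralSeries]
  constructor
  · rintro ⟨n, hn⟩
    exact ⟨n, by rw [← map_lcs_subtype, hn, Subgroup.map_bot]⟩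
  · rintro ⟨n, hn⟩
    refine ⟨n, ?_⟩
    have := map_lcs_subtype A n
    rw [hn] at this
    exact (Subgroup.map_eq_bot_iff_of_injective _ A.subtype_injective).mp this

/-! ### Max for f.g. nilpotent groups -/

lemma gseries_commutator_le (k : ℕ) :
    gseries (commutator G) k ≤ (⊤ : Subgroup G).lowerCentralSeries (k + 1) := by
  induction k with
  | zero =>
    show commutator G ≤ (⊤ : Subgroup G).lowerCentralSeries 1
    rw [lowerCentralSeries_one]
  | succ k ih =>
    show ⁅gseries (commutator G) k, commutator G⁆ ≤ ⁅(⊤ : Subgroup G).lowerCentralSeries (k + 1), ⊤⁆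
    exact Subgroup.commutator_mono ih le_top

theorem max_fg_nilpotent' :
    ∀ (c : ℕ) {G : Type u_1} [Group G], Group.FG G → (⊤ : Subgroup G).lowerCentralSeries c = ⊥ →
      ∀ P : Subgroup G, P.FG := by
  intro c
  induction c with
  | zero =>
    intro G _ _ hc P
    have hsub : ∀ x : G, x = 1 := by
      intro x
      have : x ∈ (⊤ : Subgroup G).lowerCentralSeries 0 := Subgroup.mem_top x
      rw [hc] at this
      exact Subgroup.mem_bot.mp this
    have : P = ⊥ := by
      ext x
      simp [Subgroup.mem_bot, hsub x, Subgroup.one_mem]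
    rw [this]; exact fg_bot
  | succ c ih =>
    intro G _ hfg hc P
    haveI : Group.FG G := hfg
    set N : Subgroup G := commutator G with hN
    have hNfg : N.FG := by
      have := lcs_fg (G := G) hc 1
      rwa [lowerCentralSeries_one] at this
    apply max_ext N ?_ ?_ P
    · -- subgroups of the commutator subgroup
      have hNfg' : Group.FG ↥N := (Group.fg_iff_subgroup_fg N).mpr hNfg
      have hNlcs : (⊤ : Subgroup ↥N).lowerCentralSeries c = ⊥ := by
        have h5 : ((⊤ : Subgroup ↥N).lowerCentralSeries c).map N.subtype ≤ (⊤ : Subgroup G).lowerCentralSeries (c + 1) :=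
          (map_lcs_subtype N c).le.trans (gseries_commutator_le c)
        rw [hc, le_bot_iff] at h5
        exact (Subgroup.map_eq_bot_iff_of_injective _ N.subtype_injective).mp h5
      exact ih hNfg' hNlcs
    · -- subgroups of the abelianization
      intro Q
      refine comm_max ?_ ?_ Q
      · intro a b
        obtain ⟨x, rfl⟩ := QuotientGroup.mk'_surjective N a
        obtain ⟨y, rfl⟩ := QuotientGroup.mk'_surjective N b
        show ((x * y : G) : G ⧸ N) = ((y * x : G) : G ⧸ N)
        rw [QuotientGroup.eq]
        have : (x * y)⁻¹ * (y * x) = ⁅y⁻¹, x⁻¹⁆ := by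
          simp only [commutatorElement_def]; group
        rw [this]
        exact Subgroup.commutator_mem_commutator (Subgroup.mem_top _) (Subgroup.mem_top _)
      · exact Group.fg_of_surjective (QuotientGroup.mk'_surjective N)

theorem max_fg_nilpotent {P : Subgroup G} (hfg : P.FG) (hnil : Group.IsNilpotent ↥P)
    {R : Subgroup G} (hle : R ≤ P) : R.FG := by
  obtain ⟨c, hc⟩ := nilpotent_iff_lowerCentralSeries.mp hnil
  have h1 := max_fg_nilpotent' c ((Group.fg_iff_subgroup_fg P).mpr hfg) hc (R.subgroupOf P)
  have h2 := fg_map P.subtype h1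
  rwa [Subgroup.subgroupOf_map_subtype, inf_of_le_left hle] at h2

/-! ### Fitting's theorem -/

lemma commutator_closure_le {s : Set G} (C R : Subgroup G) [R.Normal]
    (h : ∀ x ∈ s, ∀ c ∈ C, ⁅x, c⁆ ∈ R) : ⁅Subgroup.closure s, C⁆ ≤ R := by
  rw [Subgroup.commutator_le]
  intro g hg c hc
  induction hg using closure_induction with
  | mem x hx => exact h x hx c hc
  | one => simpa only [commutatorElement_one_left] using R.one_mem
  | mul x y hx hy px py =>
    rw [comm_mul_left]
    exact mul_mem (‹R.Normal›.conj_mem _ py x) px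
  | inv x hx px =>
    rw [comm_inv_left]
    have := ‹R.Normal›.conj_mem _ (inv_mem px) x⁻¹
    simpa only [mul_assoc, inv_inv] using this

lemma commutator_sup_le_of_le {A B C R : Subgroup G} [R.Normal]
    (hA : ⁅A, C⁆ ≤ R) (hB : ⁅B, C⁆ ≤ R) : ⁅A ⊔ B, C⁆ ≤ R := by
  rw [Subgroup.sup_eq_closure]
  refine commutator_closure_le C R ?_
  rintro x (hx | hx) c hc
  · exact Subgroup.commutator_le.mp hA x hx c hc
  · exact Subgroup.commutator_le.mp hB x hx c hc

lemma commutator_iSup_le_of_le {ι : Sort*} {H : ι → Subgroup G} {C R : Subgroup G} [R.Normal]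
    (h : ∀ i, ⁅H i, C⁆ ≤ R) : ⁅⨆ i, H i, C⁆ ≤ R := by
  rw [Subgroup.iSup_eq_closure]
  refine commutator_closure_le C R ?_
  rintro x hx c hc
  obtain ⟨_, ⟨i, rfl⟩, hxi⟩ := hx
  exact Subgroup.commutator_le.mp (h i) x hxi c hc

/-- `pregs A i` is `⊤` for `i = 0` and `gseries A (i-1)` for `i ≥ 1`. -/
def pregs (A : Subgroup G) : ℕ → Subgroup G
  | 0 => ⊤
  | i + 1 => gseries A i

lemma pregs_normal (A : Subgroup G) [A.Normal] : ∀ i, (pregs A i).Normal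
  | 0 => show (⊤ : Subgroup G).Normal from inferInstance
  | i + 1 => gseries_normal A i

lemma commutator_pregs (A : Subgroup G) [A.Normal] (i : ℕ) :
    ⁅pregs A i, A⁆ ≤ pregs A (i + 1) := by
  cases i with
  | zero =>
    show ⁅(⊤ : Subgroup G), A⁆ ≤ gseries A 0
    rw [Subgroup.commutator_comm]
    exact Subgroup.commutator_le_left _ _
  | succ i => exact le_rfl

lemma normal_inf' {A B : Subgroup G} (hA : A.Normal) (hB : B.Normal) : (A ⊓ B).Normal :=
  ⟨fun n hn g => ⟨hA.conj_mem n hn.1 g, hB.conj_mem n hn.2 g⟩⟩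

lemma normal_iSup' {ι : Sort*} {H : ι → Subgroup G} (h : ∀ i, (H i).Normal) :
    (⨆ i, H i).Normal := by
  rw [Subgroup.iSup_eq_closure]
  apply normal_closure_of
  rintro x ⟨_, ⟨i, rfl⟩, hxi⟩ g
  exact Subgroup.subset_closure ⟨_, ⟨i, rfl⟩, (h i).conj_mem x hxi g⟩

theorem fitting (A B : Subgroup G) [A.Normal] [B.Normal]
    (hA : Group.IsNilpotent ↥A) (hB : Group.IsNilpotent ↥B) :
    Group.IsNilpotent ↥(A ⊔ B) := by
  obtain ⟨a, ha⟩ := (isNilpotent_iff_gseries A).mp hA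
  obtain ⟨b, hb⟩ := (isNilpotent_iff_gseries B).mp hB
  rw [isNilpotent_iff_gseries]
  refine ⟨a + b, ?_⟩
  haveI hABn : (A ⊔ B).Normal := Subgroup.sup_normal A B
  have hpn : ∀ i j, (pregs A i ⊓ pregs B j).Normal := fun i j =>
    normal_inf' (pregs_normal A i) (pregs_normal B j)
  set R : ℕ → Subgroup G :=
    fun n => ⨆ i : ℕ, ⨆ _ : i ≤ n + 1, pregs A i ⊓ pregs B (n + 1 - i) with hR
  have hRn : ∀ n, (R n).Normal := by
    intro n
    exact normal_iSup' fun i => normal_iSup' fun _ => hpn _ _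
  have hterm_le : ∀ n i, i ≤ n + 1 → pregs A i ⊓ pregs B (n + 1 - i) ≤ R n := by
    intro n i hi
    exact le_iSup_of_le i (le_iSup_of_le hi le_rfl)
  have main : ∀ n, gseries (A ⊔ B) n ≤ R n := by
    intro n
    induction n with
    | zero =>
      show A ⊔ B ≤ R 0
      refine sup_le ?_ ?_
      · refine le_trans ?_ (hterm_le 0 1 (by omega))
        show A ≤ pregs A 1 ⊓ pregs B 0
        exact le_inf le_rfl le_top
      · refine le_trans ?_ (hterm_le 0 0 (by omega))
        show B ≤ pregs A 0 ⊓ pregs B 1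
        exact le_inf le_top le_rfl
    | succ n ih =>
      show ⁅gseries (A ⊔ B) n, A ⊔ B⁆ ≤ R (n + 1)
      haveI := hRn (n + 1)
      have h1 : ⁅gseries (A ⊔ B) n, A ⊔ B⁆ ≤ ⁅A ⊔ B, R n⁆ := by
        rw [Subgroup.commutator_comm]
        exact Subgroup.commutator_mono le_rfl ih
      refine h1.trans ?_
      refine commutator_sup_le_of_le ?_ ?_
      · -- ⁅A, R n⁆ ≤ R (n+1)
        rw [Subgroup.commutator_comm]
        refine commutator_iSup_le_of_le fun i => commutator_iSup_le_of_le fun hi => ?_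
        have hstep : ⁅pregs A i ⊓ pregs B (n + 1 - i), A⁆ ≤
            pregs A (i + 1) ⊓ pregs B (n + 1 - i) := by
          refine le_inf ?_ ?_
          · exact (Subgroup.commutator_mono inf_le_left le_rfl).trans (commutator_pregs A i)
          · haveI := pregs_normal B (n + 1 - i)
            exact (Subgroup.commutator_mono inf_le_right le_rfl).trans
              (Subgroup.commutator_le_left _ _)
        refine hstep.trans ?_
        have harith : n + 2 - (i + 1) = n + 1 - i := by omega
        refine le_trans ?_ (hterm_le (n + 1) (i + 1) (by omega))
        rw [harith]
      · -- ⁅B, R n⁆ ≤ R (n+1)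
        rw [Subgroup.commutator_comm]
        refine commutator_iSup_le_of_le fun i => commutator_iSup_le_of_le fun hi => ?_
        have hstep : ⁅pregs A i ⊓ pregs B (n + 1 - i), B⁆ ≤
            pregs A i ⊓ pregs B (n + 1 - i + 1) := by
          refine le_inf ?_ ?_
          · haveI := pregs_normal A i
            exact (Subgroup.commutator_mono inf_le_left le_rfl).trans
              (Subgroup.commutator_le_left _ _)
          · exact (Subgroup.commutator_mono inf_le_right le_rfl).trans
              (commutator_pregs B (n + 1 - i))
        refine hstep.trans ?_
        have harith : n + 1 - i + 1 = n + 2 - i := by omega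
        refine le_trans ?_ (hterm_le (n + 1) i (by omega))
        rw [harith]
  have hbot : R (a + b) ≤ ⊥ := by
    refine iSup_le fun i => iSup_le fun hi => ?_
    rcases Nat.lt_or_ge i (a + 1) with h | h
    · -- then a + b + 1 - i ≥ b + 1, so the B-part is trivial
      have h2 : a + b + 1 - i = (a + b - i) + 1 := by omega
      have h3 : b ≤ a + b - i := by omega
      refine inf_le_right.trans ?_
      rw [h2]
      show gseries B (a + b - i) ≤ ⊥
      rw [gseries_bot_of_ge B hb _ h3]
    · -- then the A-part is trivial
      obtain ⟨j, rfl⟩ : ∃ j, i = j + 1 := ⟨i - 1, by omega⟩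
      refine inf_le_left.trans ?_
      show gseries A j ≤ ⊥
      rw [gseries_bot_of_ge A ha j (by omega)]
  exact le_bot_iff.mp ((main (a + b)).trans hbot)

/-! ### Local nilpotency helpers -/

def LocallyNilpotent' (G : Type*) [Group G] : Prop :=
  ∀ H : Subgroup G, H.FG → Group.IsNilpotent ↥H

lemma nilp_of_le {H : Subgroup G} (hH : LocallyNilpotent' ↥H) {P : Subgroup G} (hle : P ≤ H)
    (hfg : P.FG) : Group.IsNilpotent ↥P := by
  haveI := hH (P.subgroupOf H) (fg_subgroupOf hfg hle)
  exact nilpotent_of_mulEquiv (Subgroup.subgroupOfEquivOfLe hle)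

lemma nilp_of_le_nilp {P J : Subgroup G} (hJ : Group.IsNilpotent ↥J) (hle : P ≤ J) :
    Group.IsNilpotent ↥P := by
  haveI := hJ
  haveI : Group.IsNilpotent ↥(P.subgroupOf J) := Subgroup.isNilpotent _
  exact nilpotent_of_mulEquiv (Subgroup.subgroupOfEquivOfLe hle)

/-! ### The key construction -/

lemma lemA (H K : Subgroup G) [H.Normal] [K.Normal] (hK : LocallyNilpotent' ↥K)
    (X Y : Subgroup G) (hXH : X ≤ H) (hYK : Y ≤ K) (hX : X.FG) (hY : Y.FG) :
    ∃ Xs : Subgroup G, X ≤ Xs ∧ Xs ≤ H ∧ Xs.FG ∧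
      (∀ v ∈ Y, ∀ x ∈ Xs, v * x * v⁻¹ ∈ Xs) := by
  obtain ⟨Sx, hSx⟩ := hX
  obtain ⟨Sy, hSy⟩ := hY
  set Cs : Set G := (fun p : G × G => ⁅p.1, p.2⁆) '' ((Sx : Set G) ×ˢ (Sy : Set G)) with hCs
  set Q : Subgroup G := Subgroup.closure ((Sy : Set G) ∪ Cs) with hQ
  have hYQ : Y ≤ Q := by
    rw [← hSy]
    exact Subgroup.closure_mono Set.subset_union_left
  have hQK : Q ≤ K := by
    refine Subgroup.closure_le K |>.mpr ?_
    rintro z (hz | hz)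
    · exact hYK (hSy ▸ Subgroup.subset_closure hz)
    · obtain ⟨⟨x, y⟩, hmem, rfl⟩ := hz
      obtain ⟨hx, hy⟩ := Set.mem_prod.mp hmem
      have hxH : x ∈ H := hXH (hSx ▸ Subgroup.subset_closure hx)
      have hyK : y ∈ K := hYK (hSy ▸ Subgroup.subset_closure hy)
      exact (Subgroup.mem_inf.mp (comm_mem_inf hxH hyK)).2
  have hQfg : Q.FG := fg_closure_finite (Sy.finite_toSet.union ((Sx.finite_toSet.prod Sy.finite_toSet).image _))
  have hQnil : Group.IsNilpotent ↥Q := nilp_of_le hK hQK hQfg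
  set D : Subgroup G := Q ⊓ (H ⊓ K) with hD
  have hDfg : D.FG := max_fg_nilpotent hQfg hQnil inf_le_left
  set Xs : Subgroup G := X ⊔ D with hXs
  have hDXs : D ≤ Xs := le_sup_right
  have hXXs : X ≤ Xs := le_sup_left
  have hXsH : Xs ≤ H := sup_le hXH (inf_le_right.trans inf_le_left)
  -- claim 1 : commutators of generators of X with elements of Y lie in Q
  have claim1 : ∀ x ∈ (Sx : Set G), ∀ v ∈ Y, ⁅x, v⁆ ∈ Q := by
    intro x hx v hv
    rw [← hSy] at hv
    induction hv using closure_induction with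
    | mem s hs => exact Subgroup.subset_closure (Or.inr ⟨(x, s), Set.mem_prod.mpr ⟨hx, hs⟩, rfl⟩)
    | one => simpa only [commutatorElement_one_right] using Q.one_mem
    | mul u w hu hw pu pw =>
      rw [comm_mul_right]
      have huQ : u ∈ Q := hYQ (hSy ▸ hu)
      exact mul_mem pu (mul_mem (mul_mem huQ pw) (inv_mem huQ))
    | inv u hu pu =>
      rw [comm_inv_right]
      have huQ : u ∈ Q := hYQ (hSy ▸ hu)
      exact mul_mem (mul_mem (inv_mem huQ) (inv_mem pu)) huQ
  -- claim 3 : commutators of X with Y lie in Xs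
  have claim3 : ∀ x ∈ X, ∀ v ∈ Y, ⁅x, v⁆ ∈ Xs := by
    intro x hx v hv
    rw [← hSx] at hx
    induction hx using closure_induction with
    | mem s hs =>
      refine hDXs (Subgroup.mem_inf.mpr ⟨claim1 s hs v hv, ?_⟩)
      exact comm_mem_inf (hXH (hSx ▸ Subgroup.subset_closure hs)) (hYK hv)
    | one => simpa only [commutatorElement_one_left] using Xs.one_mem
    | mul u w hu hw pu pw =>
      rw [comm_mul_left]
      have huXs : u ∈ Xs := hXXs (hSx ▸ hu)
      exact mul_mem (mul_mem (mul_mem huXs pw) (inv_mem huXs)) pu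
    | inv u hu pu =>
      rw [comm_inv_left]
      have huXs : u ∈ Xs := hXXs (hSx ▸ hu)
      exact mul_mem (mul_mem (inv_mem huXs) (inv_mem pu)) huXs
  refine ⟨Xs, hXXs, hXsH, fg_sup ⟨Sx, hSx⟩ hDfg, ?_⟩
  -- conjugation stability
  intro v hv x hx
  rw [hXs, Subgroup.sup_eq_closure] at hx
  induction hx using closure_induction with
  | mem z hz =>
    rcases hz with hz | hz
    · -- z ∈ X
      have h1 : v * z * v⁻¹ = z * ⁅z⁻¹, v⁆ := by
        simp only [commutatorElement_def]; group
      rw [h1]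
      exact mul_mem (hXXs hz) (claim3 z⁻¹ (inv_mem hz) v hv)
    · -- z ∈ D
      refine hDXs (Subgroup.mem_inf.mpr ⟨?_, ?_⟩)
      · have hvQ : v ∈ Q := hYQ hv
        exact mul_mem (mul_mem hvQ (Subgroup.mem_inf.mp hz).1) (inv_mem hvQ)
      · have hzHK := (Subgroup.mem_inf.mp hz).2
        exact Subgroup.mem_inf.mpr
          ⟨‹H.Normal›.conj_mem _ (Subgroup.mem_inf.mp hzHK).1 v,
           ‹K.Normal›.conj_mem _ (Subgroup.mem_inf.mp hzHK).2 v⟩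
  | one => simpa using Xs.one_mem
  | mul z w hz hw pz pw =>
    have h1 : v * (z * w) * v⁻¹ = (v * z * v⁻¹) * (v * w * v⁻¹) := by group
    rw [h1]
    exact mul_mem pz pw
  | inv z hz pz =>
    have h1 : v * z⁻¹ * v⁻¹ = (v * z * v⁻¹)⁻¹ := by group
    rw [h1]
    exact inv_mem pz

theorem key_nilpotent (H K : Subgroup G) [H.Normal] [K.Normal]
    (hH : LocallyNilpotent' ↥H) (hK : LocallyNilpotent' ↥K)
    (X Y : Subgroup G) (hXH : X ≤ H) (hYK : Y ≤ K) (hXfg : X.FG) (hYfg : Y.FG) :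
    ∃ J : Subgroup G, Group.IsNilpotent ↥J ∧ X ⊔ Y ≤ J := by
  obtain ⟨Xs, hXXs, hXsH, hXsfg, hconj⟩ := lemA H K hK X Y hXH hYK hXfg hYfg
  have hXsnil : Group.IsNilpotent ↥Xs := nilp_of_le hH hXsH hXsfg
  set D : Subgroup G := Xs ⊓ (H ⊓ K) with hD
  have hDfg : D.FG := max_fg_nilpotent hXsfg hXsnil inf_le_left
  set Ys : Subgroup G := Y ⊔ D with hYs
  have hYYs : Y ≤ Ys := le_sup_left
  have hDYs : D ≤ Ys := le_sup_right
  have hYsK : Ys ≤ K := sup_le hYK (inf_le_right.trans inf_le_right)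
  have hYsfg : Ys.FG := fg_sup hYfg hDfg
  have hYsnil : Group.IsNilpotent ↥Ys := nilp_of_le hK hYsK hYsfg
  set Js : Subgroup G := Xs ⊔ Y with hJs
  have hXsJs : Xs ≤ Js := le_sup_left
  have hJs_eq : Js = Xs ⊔ Ys := by
    refine le_antisymm (sup_le le_sup_left (le_sup_of_le_right le_sup_left)) ?_
    exact sup_le le_sup_left (sup_le le_sup_right (le_sup_of_le_left inf_le_left))
  have hYsJs : Ys ≤ Js := by rw [hJs_eq]; exact le_sup_right
  -- Js normalizes Xs
  have hYnorm : Y ≤ Subgroup.normalizer (Xs : Set G) := by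
    intro v hv
    rw [Subgroup.mem_normalizer_iff]
    intro h
    constructor
    · exact fun hh => hconj v hv h hh
    · intro hh
      have h2 := hconj v⁻¹ (inv_mem hv) _ hh
      have h3 : v⁻¹ * (v * h * v⁻¹) * v⁻¹⁻¹ = h := by group
      rwa [h3] at h2
  have hJsnorm : Js ≤ Subgroup.normalizer (Xs : Set G) := sup_le Subgroup.le_normalizer hYnorm
  -- Js normalizes Ys
  have bXs : ∀ a ∈ Xs, ∀ w ∈ Ys, a * w * a⁻¹ ∈ Ys := by
    intro a ha w hw
    rw [hYs, Subgroup.sup_eq_closure] at hw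
    induction hw using closure_induction with
    | mem z hz =>
      rcases hz with hz | hz
      · -- z ∈ Y
        have h1 : a * z * a⁻¹ = z * ⁅z⁻¹, a⁆ := by
          simp only [commutatorElement_def]; group
        rw [h1]
        refine mul_mem (hYYs hz) (hDYs (Subgroup.mem_inf.mpr ⟨?_, ?_⟩))
        · -- ⁅z⁻¹, a⁆ ∈ Xs
          have h2 : ⁅z⁻¹, a⁆ = (z⁻¹ * a * z⁻¹⁻¹) * a⁻¹ := by
            simp only [commutatorElement_def]
          rw [h2]
          exact mul_mem (hconj z⁻¹ (inv_mem hz) a ha) (inv_mem ha)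
        · have := comm_mem_inf (H := K) (K := H) (inv_mem (hYK hz)) (hXsH ha)
          exact Subgroup.mem_inf.mpr ⟨(Subgroup.mem_inf.mp this).2, (Subgroup.mem_inf.mp this).1⟩
      · -- z ∈ D
        refine hDYs (Subgroup.mem_inf.mpr ⟨?_, ?_⟩)
        · exact mul_mem (mul_mem ha (Subgroup.mem_inf.mp hz).1) (inv_mem ha)
        · have hzHK := (Subgroup.mem_inf.mp hz).2
          exact Subgroup.mem_inf.mpr
            ⟨‹H.Normal›.conj_mem _ (Subgroup.mem_inf.mp hzHK).1 a,
             ‹K.Normal›.conj_mem _ (Subgroup.mem_inf.mp hzHK).2 a⟩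
    | one => simpa using Ys.one_mem
    | mul z w' hz hw' pz pw' =>
      have h1 : a * (z * w') * a⁻¹ = (a * z * a⁻¹) * (a * w' * a⁻¹) := by group
      rw [h1]; exact mul_mem pz pw'
    | inv z hz pz =>
      have h1 : a * z⁻¹ * a⁻¹ = (a * z * a⁻¹)⁻¹ := by group
      rw [h1]; exact inv_mem pz
  have bY : ∀ v ∈ Y, ∀ w ∈ Ys, v * w * v⁻¹ ∈ Ys := by
    intro v hv w hw
    rw [hYs, Subgroup.sup_eq_closure] at hw
    induction hw using closure_induction with
    | mem z hz =>
      rcases hz with hz | hz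
      · exact hYYs (Subgroup.mul_mem _ (Subgroup.mul_mem _ hv hz) (inv_mem hv))
      · refine hDYs (Subgroup.mem_inf.mpr ⟨?_, ?_⟩)
        · exact hconj v hv _ (Subgroup.mem_inf.mp hz).1
        · have hzHK := (Subgroup.mem_inf.mp hz).2
          exact Subgroup.mem_inf.mpr
            ⟨‹H.Normal›.conj_mem _ (Subgroup.mem_inf.mp hzHK).1 v,
             ‹K.Normal›.conj_mem _ (Subgroup.mem_inf.mp hzHK).2 v⟩
    | one => simpa using Ys.one_mem
    | mul z w' hz hw' pz pw' =>
      have h1 : v * (z * w') * v⁻¹ = (v * z * v⁻¹) * (v * w' * v⁻¹) := by group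
      rw [h1]; exact mul_mem pz pw'
    | inv z hz pz =>
      have h1 : v * z⁻¹ * v⁻¹ = (v * z * v⁻¹)⁻¹ := by group
      rw [h1]; exact inv_mem pz
  have hJsYsnorm : Js ≤ Subgroup.normalizer (Ys : Set G) := by
    rw [hJs]
    refine sup_le ?_ ?_
    · intro a ha
      rw [Subgroup.mem_normalizer_iff]
      intro w
      constructor
      · exact fun hw => bXs a ha w hw
      · intro hw
        have h2 := bXs a⁻¹ (inv_mem ha) _ hw
        have h3 : a⁻¹ * (a * w * a⁻¹) * a⁻¹⁻¹ = w := by group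
        rwa [h3] at h2
    · intro v hv
      rw [Subgroup.mem_normalizer_iff]
      intro w
      constructor
      · exact fun hw => bY v hv w hw
      · intro hw
        have h2 := bY v⁻¹ (inv_mem hv) _ hw
        have h3 : v⁻¹ * (v * w * v⁻¹) * v⁻¹⁻¹ = w := by group
        rwa [h3] at h2
  -- pass to subgroups of Js
  set A : Subgroup ↥Js := Xs.subgroupOf Js with hA
  set B : Subgroup ↥Js := Ys.subgroupOf Js with hB
  haveI hAnormal : A.Normal := by
    constructor
    rintro n hn g
    have := Subgroup.mem_normalizer_iff.mp (hJsnorm g.2) (n : G) |>.mp hn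
    exact this
  haveI hBnormal : B.Normal := by
    constructor
    rintro n hn g
    have := Subgroup.mem_normalizer_iff.mp (hJsYsnorm g.2) (n : G) |>.mp hn
    exact this
  have hAnil : Group.IsNilpotent ↥A := by
    haveI := hXsnil
    exact nilpotent_of_mulEquiv (Subgroup.subgroupOfEquivOfLe hXsJs).symm
  have hBnil : Group.IsNilpotent ↥B := by
    haveI := hYsnil
    exact nilpotent_of_mulEquiv (Subgroup.subgroupOfEquivOfLe hYsJs).symm
  have hsup : A ⊔ B = ⊤ := by
    apply Subgroup.map_injective Js.subtype_injective
    rw [Subgroup.map_sup, hA, hB, Subgroup.subgroupOf_map_subtype,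
      Subgroup.subgroupOf_map_subtype, inf_of_le_left hXsJs, inf_of_le_left hYsJs,
      ← MonoidHom.range_eq_map, Subgroup.range_subtype, ← hJs_eq]
  have htop : Group.IsNilpotent ↥(A ⊔ B) := fitting A B hAnil hBnil
  rw [hsup] at htop
  haveI := htop
  refine ⟨Js, nilpotent_of_mulEquiv Subgroup.topEquiv, ?_⟩
  exact sup_le (hXXs.trans hXsJs) le_sup_right

end HirschPlotkinAux

/-- (Hirsch) If `H` and `K` are normal locally nilpotent subgroups of `G`, then `HK`
is also locally nilpotent. -/
theorem stmt_9 {G : Type*} [Group G] (H K : Subgroup G) [H.Normal] [K.Normal]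
    (hH : LocallyNilpotent ↥H) (hK : LocallyNilpotent ↥K) :
    LocallyNilpotent ↥(H ⊔ K) := by
  intro L hL
  have hH' : HirschPlotkinAux.LocallyNilpotent' ↥H := hH
  have hK' : HirschPlotkinAux.LocallyNilpotent' ↥K := hK
  -- push L down to a subgroup of G
  set M : Subgroup G := L.map (H ⊔ K).subtype with hM
  have hMfg : M.FG := HirschPlotkinAux.fg_map _ hL
  have hMle : M ≤ H ⊔ K := by
    rintro x ⟨y, hy, rfl⟩
    exact y.2
  obtain ⟨Sf, hSf⟩ := hMfg
  -- decompose each generator as a product h * k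
  have hdecomp : ∀ s : ↥(Sf : Set G), ∃ p : G × G, p.1 ∈ H ∧ p.2 ∈ K ∧ (s : G) = p.1 * p.2 := by
    rintro ⟨s, hs⟩
    have h1 : s ∈ H ⊔ K := hMle (hSf ▸ Subgroup.subset_closure hs)
    have h2 : s ∈ ((H : Set G) * (K : Set G)) := by
      rw [← Subgroup.mul_normal H K]
      exact h1
    obtain ⟨h, hh, k, hk, hhk⟩ := Set.mem_mul.mp h2
    exact ⟨(h, k), hh, hk, hhk.symm⟩
  choose f hf1 hf2 hf3 using hdecomp
  haveI : Finite ↥(Sf : Set G) := Sf.finite_toSet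
  set X : Subgroup G := Subgroup.closure (Set.range fun s => (f s).1) with hX
  set Y : Subgroup G := Subgroup.closure (Set.range fun s => (f s).2) with hY
  have hXH : X ≤ H := Subgroup.closure_le H |>.mpr (by rintro _ ⟨s, rfl⟩; exact hf1 s)
  have hYK : Y ≤ K := Subgroup.closure_le K |>.mpr (by rintro _ ⟨s, rfl⟩; exact hf2 s)
  have hXfg : X.FG := HirschPlotkinAux.fg_closure_finite (Set.finite_range _)
  have hYfg : Y.FG := HirschPlotkinAux.fg_closure_finite (Set.finite_range _)
  obtain ⟨J, hJnil, hJle⟩ :=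
    HirschPlotkinAux.key_nilpotent H K hH' hK' X Y hXH hYK hXfg hYfg
  have hMJ : M ≤ J := by
    rw [← hSf]
    refine Subgroup.closure_le J |>.mpr ?_
    intro s hs
    have h4 : s = (f ⟨s, hs⟩).1 * (f ⟨s, hs⟩).2 := hf3 ⟨s, hs⟩
    rw [h4]
    refine mul_mem (hJle ?_) (hJle ?_)
    · exact le_sup_left (α := Subgroup G) (Subgroup.subset_closure ⟨⟨s, hs⟩, rfl⟩)
    · exact le_sup_right (α := Subgroup G) (Subgroup.subset_closure ⟨⟨s, hs⟩, rfl⟩)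
  have hMnil : Group.IsNilpotent ↥M := HirschPlotkinAux.nilp_of_le_nilp hJnil hMJ
  haveI := hMnil
  exact nilpotent_of_mulEquiv (L.equivMapOfInjective _ (H ⊔ K).subtype_injective).symm
end

section
/- Let M be a minimal normal subgroup of a locally nilpotent group G, i.e. M is a nontrivial normal subgroup of G such that no nontrivial normal subgroup of G is properly contained in M. Then M lies in the centre of G. -/
/-- A minimal normal subgroup of a locally nilpotent group lies in the centre. -/
theorem stmt_11 {G : Type*} [Group G] (hG : LocallyNilpotent G)
    (M : Subgroup G) (hMnormal : M.Normal) (hMbot : M ≠ ⊥)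
    (hmin : ∀ N : Subgroup G, N.Normal → N ≤ M → N = ⊥ ∨ N = M) :
    M ≤ Subgroup.center G := by
  intro m hm
  rw [Subgroup.mem_center_iff]
  intro g
  classical
  open scoped commutatorElement in set c : G := ⁅m, g⁆ with hcdef
  by_cases hc : c = 1
  · exact (commutatorElement_eq_one_iff_mul_comm.mp hc).symm
  · exfalso
    -- c ∈ M
    have hcM : c ∈ M := by
      have h1 : g * m⁻¹ * g⁻¹ ∈ M := hMnormal.conj_mem m⁻¹ (inv_mem hm) g
      have : m * (g * m⁻¹ * g⁻¹) ∈ M := M.mul_mem hm h1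
      simpa [hcdef, commutatorElement_def, mul_assoc] using this
    -- normal closure of {c} equals M
    have hNle : Subgroup.normalClosure {c} ≤ M :=
      Subgroup.normalClosure_le_normal (by simpa using hcM)
    have hNne : Subgroup.normalClosure {c} ≠ ⊥ := by
      intro h
      exact hc (by simpa [h, Subgroup.mem_bot] using
        Subgroup.subset_normalClosure (s := {c}) rfl)
    have hNM : Subgroup.normalClosure {c} = M := by
      rcases hmin _ (Subgroup.normalClosure_normal) hNle with h | h
      · exact absurd h hNne
      · exact h
    have hmN : m ∈ Subgroup.normalClosure {c} := hNM ▸ hm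
    -- extract finitely many conjugators
    have hfin : ∃ s : Finset G, m ∈ Subgroup.closure ((fun y => y * c * y⁻¹) '' ↑s) := by
      refine Subgroup.closure_induction ?_ ?_ ?_ ?_ hmN
      · intro x hx
        rcases Group.mem_conjugatesOfSet_iff.mp hx with ⟨a, ha, hconj⟩
        rcases isConj_iff.mp hconj with ⟨y, rfl⟩
        rcases ha with rfl
        exact ⟨{y}, Subgroup.subset_closure ⟨y, by simp, rfl⟩⟩
      · exact ⟨∅, Subgroup.one_mem _⟩
      · rintro x y _ _ ⟨s₁, hs₁⟩ ⟨s₂, hs₂⟩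
        refine ⟨s₁ ∪ s₂, Subgroup.mul_mem _ ?_ ?_⟩
        · exact Subgroup.closure_mono (Set.image_mono (by simp)) hs₁
        · exact Subgroup.closure_mono (Set.image_mono (by simp)) hs₂
      · rintro x _ ⟨s, hs⟩
        exact ⟨s, Subgroup.inv_mem _ hs⟩
    obtain ⟨s, hms⟩ := hfin
    -- the finitely generated subgroup H
    set H : Subgroup G := Subgroup.closure ({m, g} ∪ ↑s) with hHdef
    have hmH : m ∈ H := Subgroup.subset_closure (by simp)
    have hgH : g ∈ H := Subgroup.subset_closure (by simp)
    have hsH : ∀ y ∈ s, y ∈ H := fun y hy => Subgroup.subset_closure (by simp [hy])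
    have hHfg : H.FG := (Subgroup.fg_iff H).mpr
      ⟨({m, g} ∪ ↑s), rfl, Set.Finite.union (Set.toFinite _) s.finite_toSet⟩
    have hHnil : Group.IsNilpotent ↥H := hG H hHfg
    -- m lies in every term of the lower central series of H
    have key : ∀ k, m ∈ (Subgroup.lowerCentralSeries (⊤ : Subgroup ↥H) k).map H.subtype := by
      intro k
      induction k with
      | zero =>
          rw [Subgroup.lowerCentralSeries_zero, ← MonoidHom.range_eq_map, Subgroup.range_subtype]
          exact hmH
      | succ k ih =>
          have hstep : (Subgroup.lowerCentralSeries (⊤ : Subgroup ↥H) (k + 1)).map H.subtype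
              = ⁅(Subgroup.lowerCentralSeries (⊤ : Subgroup ↥H) k).map H.subtype, H⁆ := by
            have h1 : Subgroup.lowerCentralSeries (⊤ : Subgroup ↥H) (k + 1)
                = ⁅Subgroup.lowerCentralSeries (⊤ : Subgroup ↥H) k, ⊤⁆ := rfl
            rw [h1, Subgroup.map_commutator, ← MonoidHom.range_eq_map,
              Subgroup.range_subtype]
          have hcmem : c ∈ (Subgroup.lowerCentralSeries (⊤ : Subgroup ↥H) (k + 1)).map H.subtype := by
            rw [hstep]
            exact Subgroup.commutator_mem_commutator ih hgH
          -- conjugates of c by elements of s lie there too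
          have hconj : ∀ y ∈ s, y * c * y⁻¹ ∈
              (Subgroup.lowerCentralSeries (⊤ : Subgroup ↥H) (k + 1)).map H.subtype := by
            intro y hy
            rcases hcmem with ⟨c', hc', hc'eq⟩
            refine ⟨⟨y, hsH y hy⟩ * c' * ⟨y, hsH y hy⟩⁻¹, ?_, by simp [hc'eq]; exact hc'eq⟩
            exact (inferInstance : (Subgroup.lowerCentralSeries (⊤ : Subgroup ↥H) (k + 1)).Normal).conj_mem c' hc' ⟨y, hsH y hy⟩
          have hle : Subgroup.closure ((fun y => y * c * y⁻¹) '' ↑s)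
              ≤ (Subgroup.lowerCentralSeries (⊤ : Subgroup ↥H) (k + 1)).map H.subtype := by
            rw [Subgroup.closure_le]
            rintro x ⟨y, hy, rfl⟩
            exact hconj y hy
          exact hle hms
    obtain ⟨n, hn⟩ := (Subgroup.isNilpotent_iff_lowerCentralSeries (S := H)).mp hHnil
    rw [← Subgroup.top_subtype_lowerCentralSeries,
      Subgroup.map_eq_bot_iff_of_injective _ H.subtype_injective] at hn
    have := key n
    rw [hn, Subgroup.map_bot, Subgroup.mem_bot] at this
    exact hc (by simp [hcdef, this])
end

section
/- Let H and K be arbitrary subgroups of a group G. Define H_0 = H and inductively H_{i+1} = [H_i, K]. If H_r = 1 for some r ≥ 0, then [H, γ_{1 + r(r-1)/2}(K)] = 1, where γ_j(K) denotes the j-th term of the lower central series of K. -/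
namespace Stmt13Aux

open scoped commutatorElement

variable {G : Type*} [Group G]

/-- The commutator `⁅A, K⁆` is stable under conjugation by elements of `K`. -/
lemma conj_mem_commutator {A K : Subgroup G} {k x : G} (hk : k ∈ K) (hx : x ∈ ⁅A, K⁆) :
    k * x * k⁻¹ ∈ ⁅A, K⁆ := by
  have hle : ⁅A, K⁆ ≤ Subgroup.comap ((MulAut.conj k).toMonoidHom) ⁅A, K⁆ := by
    rw [Subgroup.commutator_le]
    intro a ha b hb
    have key : k * ⁅a, b⁆ * k⁻¹ = ⁅a, k⁆⁻¹ * ⁅a, k * b⁆ := by group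
    simp only [Subgroup.mem_comap, MulEquiv.coe_toMonoidHom, MulAut.conj_apply]
    rw [key]
    exact mul_mem (inv_mem (Subgroup.commutator_mem_commutator ha hk))
      (Subgroup.commutator_mem_commutator ha (mul_mem hk hb))
  simpa using hle hx

lemma conj_mem_commutator' {A K : Subgroup G} {k x : G} (hk : k ∈ K) (hx : x ∈ ⁅A, K⁆) :
    k⁻¹ * x * k ∈ ⁅A, K⁆ := by
  simpa using conj_mem_commutator (inv_mem hk) hx

/-- Key commutator manipulation (a form of the Hall–Witt identity). -/
lemma hw_key (h b k : G) (hz : ⁅⁅h⁻¹, k⁻¹⁆, b⁻¹⁆ = 1) :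
    ⁅h, ⁅b, k⁆⁆ = ⁅⁅h, b⁆, b * k * b⁻¹⁆ := by
  have e1 : ⁅h, ⁅b, k⁆⁆ =
      ⁅h,b⁆ * (b * (k * (h * ⁅⁅h⁻¹,k⁻¹⁆, b⁻¹⁆ * h⁻¹ * ⁅h,b⁻¹⁆) * k⁻¹) * b⁻¹) := by
    group
  rw [hz] at e1
  rw [e1]
  group

theorem aux (K : Subgroup G) (g : ℕ → Subgroup G) (hg0 : g 0 = K)
    (hgs : ∀ j, g (j + 1) = ⁅g j, K⁆) :
    ∀ (r : ℕ) (f : ℕ → Subgroup G), (∀ i, f (i + 1) = ⁅f i, K⁆) → f r = ⊥ →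
      ⁅f 0, g (r * (r - 1) / 2)⁆ = ⊥ := by
  -- stability of the g-series under conjugation by K
  have hgstab : ∀ j, ∀ k ∈ K, ∀ x ∈ g j, k * x * k⁻¹ ∈ g j := by
    intro j
    induction j with
    | zero =>
      intro k hk x hx
      rw [hg0] at hx ⊢
      exact mul_mem (mul_mem hk hx) (inv_mem hk)
    | succ n _ =>
      intro k hk x hx
      rw [hgs] at hx ⊢
      exact conj_mem_commutator hk hx
  -- the g-series is decreasing
  have hgdec : ∀ j, g (j + 1) ≤ g j := by
    intro j
    rw [hgs, Subgroup.commutator_le]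
    intro x hx k hk
    have e : ⁅x, k⁆ = x * (k * x⁻¹ * k⁻¹) := by group
    rw [e]
    exact mul_mem hx (hgstab j k hk x⁻¹ (inv_mem hx))
  have hgle : ∀ j j', j ≤ j' → g j' ≤ g j := by
    intro j j' h
    induction h with
    | refl => exact le_rfl
    | step _ ih =>
      exact le_trans (hgdec _) ih
  have hgK : ∀ j, g j ≤ K := fun j => hg0 ▸ hgle 0 j (Nat.zero_le j)
  intro r
  induction r with
  | zero =>
    intro f hfs hr
    have h0 : (0 : ℕ) * (0 - 1) / 2 = 0 := rfl
    rw [h0, hr, Subgroup.commutator_bot_left]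
  | succ r ih =>
    intro f hfs hr
    have hB : ⁅f 1, g (r * (r - 1) / 2)⁆ = ⊥ := ih (fun i => f (i + 1)) (fun i => hfs (i + 1)) hr
    set m := r * (r - 1) / 2 with hm
    -- stability of the f-series (from index 1 on) under conjugation by K
    have hfstab : ∀ t, ∀ k ∈ K, ∀ x ∈ f (t + 1), k * x * k⁻¹ ∈ f (t + 1) := by
      intro t k hk x hx
      rw [hfs] at hx ⊢
      exact conj_mem_commutator hk hx
    have hfstab' : ∀ t, ∀ k ∈ K, ∀ x ∈ f (t + 1), k⁻¹ * x * k ∈ f (t + 1) := by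
      intro t k hk x hx
      rw [hfs] at hx ⊢
      exact conj_mem_commutator' hk hx
    -- the central lemma (Hall's argument): ⁅f 0, g (m + t)⁆ ≤ f (t + 1)
    have CL : ∀ t, ⁅f 0, g (m + t)⁆ ≤ f (t + 1) := by
      intro t
      induction t with
      | zero =>
        calc ⁅f 0, g (m + 0)⁆ ≤ ⁅f 0, K⁆ := Subgroup.commutator_mono le_rfl (hgK (m + 0))
        _ = f 1 := (hfs 0).symm
      | succ t iht =>
        -- elements of f 1 commute with elements of g (m + t)
        have hfg1bot : ∀ y ∈ f 1, ∀ x ∈ g (m + t), ⁅y, x⁆ = 1 := by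
          intro y hy x hx
          have hmem : ⁅y, x⁆ ∈ ⁅f 1, g (m + t)⁆ := Subgroup.commutator_mem_commutator hy hx
          have h2 : ⁅f 1, g (m + t)⁆ ≤ ⊥ :=
            le_trans (Subgroup.commutator_mono le_rfl (hgle m (m + t) (Nat.le_add_right m t)))
              hB.le
          simpa [Subgroup.mem_bot] using h2 hmem
        -- the subgroup of elements u ∈ K with ⁅h, u⁆ ∈ f (t + 2) for all h ∈ f 0
        let T : Subgroup G :=
          { carrier := {u | u ∈ K ∧ ∀ h ∈ f 0, ⁅h, u⁆ ∈ f (t + 2)}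
            one_mem' := by
              refine ⟨one_mem K, ?_⟩
              intro h _
              simp only [commutatorElement_one_right]
              exact (f (t + 2)).one_mem
            mul_mem' := by
              rintro u v ⟨huK, hu⟩ ⟨hvK, hv⟩
              refine ⟨mul_mem huK hvK, ?_⟩
              intro h hh
              have e : ⁅h, u * v⁆ = ⁅h, u⁆ * (u * ⁅h, v⁆ * u⁻¹) := by group
              rw [e]
              exact mul_mem (hu h hh) (hfstab (t + 1) u huK _ (hv h hh))
            inv_mem' := by
              rintro u ⟨huK, hu⟩
              refine ⟨inv_mem huK, ?_⟩
              intro h hh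
              have e : ⁅h, u⁻¹⁆ = u⁻¹ * ⁅h, u⁆⁻¹ * u := by group
              rw [e]
              exact hfstab' (t + 1) u huK _ (inv_mem (hu h hh)) }
        have hT : g (m + t + 1) ≤ T := by
          rw [hgs, Subgroup.commutator_le]
          intro b hb k hk
          have hbK : b ∈ K := hgK (m + t) hb
          refine ⟨?_, ?_⟩
          · rw [commutatorElement_def]
            exact mul_mem (mul_mem (mul_mem hbK hk) (inv_mem hbK)) (inv_mem hk)
          · intro h hh
            have hz : ⁅⁅h⁻¹, k⁻¹⁆, b⁻¹⁆ = 1 := by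
              refine hfg1bot _ ?_ _ (inv_mem hb)
              rw [hfs 0]
              exact Subgroup.commutator_mem_commutator (inv_mem hh) (inv_mem hk)
            rw [hw_key h b k hz]
            have h1 : ⁅h, b⁆ ∈ f (t + 1) := iht (Subgroup.commutator_mem_commutator hh hb)
            have h2 : b * k * b⁻¹ ∈ K := mul_mem (mul_mem hbK hk) (inv_mem hbK)
            rw [hfs (t + 1)]
            exact Subgroup.commutator_mem_commutator h1 h2
        rw [Subgroup.commutator_le]
        intro h hh u hu
        exact (hT hu).2 h hh
    have hfinal : ⁅f 0, g (m + r)⁆ ≤ f (r + 1) := CL r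
    rw [hr] at hfinal
    have hidx : (r + 1) * ((r + 1) - 1) / 2 = m + r := by
      rw [hm]
      have hsub : (r + 1) - 1 = r := by omega
      rw [hsub]
      obtain ⟨q, hq⟩ : ∃ q, r * (r - 1) = q + q := by
        rcases r with _ | s
        · exact ⟨0, rfl⟩
        · have := Nat.even_mul_succ_self s
          obtain ⟨q, hq⟩ := this
          exact ⟨q, by
            have hsub2 : s + 1 - 1 = s := by omega
            rw [hsub2, Nat.mul_comm]
            exact hq⟩
      have h2 : (r + 1) * r = r * (r - 1) + 2 * r := by
        rcases r with _ | s
        · rfl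
        · have hsub2 : s + 1 - 1 = s := by omega
          rw [hsub2]
          ring
      generalize hA : r * (r - 1) = A at hq h2 ⊢
      generalize hBn : (r + 1) * r = B at h2 ⊢
      omega
    rw [hidx]
    exact le_bot_iff.mp hfinal

end Stmt13Aux

/-- Let `H`, `K` be subgroups of `G`; set `H_0 = H`, `H_{i+1} = [H_i, K]` and let
`g j = γ_{j+1}(K)` be the lower central series of `K` (as subgroups of `G`:
`g 0 = K`, `g (j+1) = [g j, K]`).  If `H_r = 1` then `[H, γ_{1 + r(r-1)/2}(K)] = 1`. -/
theorem stmt_13 {G : Type*} [Group G] (H K : Subgroup G) {r : ℕ}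
    (f : ℕ → Subgroup G) (hf0 : f 0 = H) (hfs : ∀ i, f (i + 1) = ⁅f i, K⁆)
    (g : ℕ → Subgroup G) (hg0 : g 0 = K) (hgs : ∀ j, g (j + 1) = ⁅g j, K⁆)
    (hr : f r = ⊥) :
    ⁅H, g (r * (r - 1) / 2)⁆ = ⊥ := by
  rw [← hf0]
  exact Stmt13Aux.aux K g hg0 hgs r f hfs hr
end

section
/- (Hirsch) Let G be a polycyclic group, i.e. a soluble group in which every subgroup is finitely generated, and let x be an element of G with x ≠ 1. Then there exists an integer m > 0 such that the subgroup G^m generated by all m-th powers {g^m : g ∈ G} is torsion-free and does not contain x. -/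
open Subgroup
open scoped commutatorElement

universe u

section Helpers

variable {G : Type u} [Group G]

private lemma isOfFinOrder_coe_iff {K : Subgroup G} (a : ↥K) :
    IsOfFinOrder (a : G) ↔ IsOfFinOrder a := by
  rw [← orderOf_pos_iff, ← orderOf_pos_iff, Subgroup.orderOf_coe]

private lemma fg_map {H : Type*} [Group H] (f : G →* H) {K : Subgroup G} (h : K.FG) :
    (K.map f).FG := by
  obtain ⟨S, hS, hfin⟩ := (Subgroup.fg_iff K).mp h
  exact (Subgroup.fg_iff _).mpr ⟨f '' S, by rw [← MonoidHom.map_closure, hS], hfin.image f⟩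

private lemma fg_of_subgroup (hmax : ∀ H : Subgroup G, H.FG) (N : Subgroup G) :
    ∀ K : Subgroup ↥N, K.FG := fun K => by
  haveI h1 : Group.FG ↥(K.map N.subtype) :=
    (Group.fg_iff_subgroup_fg _).mpr (hmax _)
  have h2 : Group.FG ↥K :=
    Group.fg_of_surjective
      (f := ((K.equivMapOfInjective N.subtype N.subtype_injective).symm.toMonoidHom))
      (MulEquiv.surjective _)
  exact (Group.fg_iff_subgroup_fg K).mp h2

private lemma fg_of_quotient (hmax : ∀ H : Subgroup G, H.FG) (N : Subgroup G) [N.Normal] :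
    ∀ K : Subgroup (G ⧸ N), K.FG := fun K => by
  have h := fg_map (QuotientGroup.mk' N) (hmax (K.comap (QuotientGroup.mk' N)))
  rwa [Subgroup.map_comap_eq_self_of_surjective (QuotientGroup.mk'_surjective N)] at h

private lemma derivedSeries_map_subtype_le (N : Subgroup G) (hN : N ≤ derivedSeries G 1) :
    ∀ k, Subgroup.map N.subtype (derivedSeries ↥N k) ≤ derivedSeries G (k + 1)
  | 0 => by
      rw [derivedSeries_zero, ← MonoidHom.range_eq_map, Subgroup.range_subtype]
      exact hN
  | (k + 1) => by
      rw [derivedSeries_succ, show derivedSeries G (k + 1 + 1) = ⁅derivedSeries G (k+1), derivedSeries G (k+1)⁆ from rfl, Subgroup.map_commutator]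
      exact Subgroup.commutator_mono (derivedSeries_map_subtype_le N hN k)
        (derivedSeries_map_subtype_le N hN k)

private lemma derivedSeries_succ_bot {n : ℕ} (h : derivedSeries G (n + 1) = ⊥)
    (N : Subgroup G) (hN : N ≤ derivedSeries G 1) : derivedSeries ↥N n = ⊥ := by
  have h2 := (derivedSeries_map_subtype_le N hN n).trans h.le
  rwa [le_bot_iff, Subgroup.map_eq_bot_iff_of_injective _ N.subtype_injective] at h2

private lemma finite_of_torsion : ∀ (n : ℕ) (G : Type u) [Group G],
    (∀ H : Subgroup G, H.FG) → (∀ g : G, IsOfFinOrder g) → derivedSeries G n = ⊥ → Finite G := by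
  intro n
  induction n with
  | zero =>
    intro G _ _ _ h
    rw [derivedSeries_zero] at h
    haveI : Subsingleton G :=
      ⟨fun a b => by
        have ha : a ∈ (⊥ : Subgroup G) := by rw [← h]; exact Subgroup.mem_top a
        have hb : b ∈ (⊥ : Subgroup G) := by rw [← h]; exact Subgroup.mem_top b
        rw [Subgroup.mem_bot.mp ha, Subgroup.mem_bot.mp hb]⟩
    exact Finite.of_subsingleton
  | succ n ih =>
    intro G _ hmax htor hbot
    haveI hN : Finite ↥(commutator G) :=
      ih ↥(commutator G) (fg_of_subgroup hmax _)
        (fun g => (isOfFinOrder_coe_iff g).mp (htor _))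
        (derivedSeries_succ_bot hbot _ (derivedSeries_one G).ge)
    haveI : Group.FG G := Group.fg_def.mpr (hmax ⊤)
    have hsurj : Function.Surjective (Abelianization.of (G := G)) := fun q =>
      QuotientGroup.mk_surjective q
    haveI : Group.FG (Abelianization G) := Group.fg_of_surjective hsurj
    haveI : Finite (Abelianization G) :=
      CommGroup.finite_of_fg_torsion _ (fun q => by
        obtain ⟨y, rfl⟩ := hsurj q
        exact (Abelianization.of (G := G)).isOfFinOrder (htor y))
    haveI : Finite (G ⧸ commutator G) := ‹Finite (Abelianization G)›
    exact Finite.of_equiv _ (Subgroup.groupEquivQuotientProdSubgroup (s := commutator G)).symm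

private lemma finite_of_torsion' (G : Type u) [Group G] [hs : Group.IsSolvable G]
    (hmax : ∀ H : Subgroup G, H.FG) (htor : ∀ g : G, IsOfFinOrder g) : Finite G := by
  obtain ⟨n, hn⟩ := hs
  exact finite_of_torsion n G hmax htor hn

private lemma isOfFinOrder_of_zpow_eq_one {M : Type*} [Group M] {a : M} {k : ℤ}
    (hk : k ≠ 0) (h : a ^ k = 1) : IsOfFinOrder a := by
  refine isOfFinOrder_iff_pow_eq_one.mpr ⟨k.natAbs, Int.natAbs_pos.mpr hk, ?_⟩
  have h2 : a ^ (k.natAbs : ℤ) = 1 := by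
    rcases Int.natAbs_eq k with he | he
    · rw [← he, h]
    · rw [he, zpow_neg] at h
      exact inv_eq_one.mp h
  rwa [zpow_natCast] at h2

private def ResFin (G : Type u) [Group G] : Prop :=
  ∀ x : G, x ≠ 1 → ∃ H : Subgroup G, H.FiniteIndex ∧ x ∉ H

private lemma resFin_comm (A : Type u) [CommGroup A] [Group.FG A] : ResFin A := by
  intro x hx
  obtain ⟨B, -, hBs, hBmax⟩ :=
    zorn_le_nonempty₀ {B : Subgroup A | x ∉ B}
      (fun c hcs hchain y hy => by
        refine ⟨sSup c, ?_, fun z hz => le_sSup hz⟩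
        intro hxs
        obtain ⟨S, hSc, hxS⟩ :=
          (Subgroup.mem_sSup_of_directedOn ⟨y, hy⟩ hchain.directedOn).mp hxs
        exact hcs hSc hxS)
      ⊥ (by simpa using hx)
  -- B is maximal among subgroups not containing x
  have key : ∀ y : A, y ∉ B → x ∈ B ⊔ Subgroup.zpowers y := by
    intro y hy
    by_contra hxBy
    exact hy (hBmax hxBy le_sup_left (le_sup_right (a := B) (Subgroup.mem_zpowers y)))
  haveI : B.Normal := inferInstance
  set π := QuotientGroup.mk' B
  have hπs := QuotientGroup.mk'_surjective B
  have key2 : ∀ q : A ⧸ B, q ≠ 1 → π x ∈ Subgroup.zpowers q := by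
    intro q hq
    obtain ⟨y, rfl⟩ := hπs q
    have hy : y ∉ B := fun h => hq ((QuotientGroup.eq_one_iff y).mpr h)
    have := key y hy
    have h2 : π x ∈ (B ⊔ Subgroup.zpowers y).map π := ⟨x, this, rfl⟩
    rwa [Subgroup.map_sup, MonoidHom.map_zpowers,
      (Subgroup.map_eq_bot_iff _).mpr (QuotientGroup.ker_mk' B).ge, bot_sup_eq] at h2
  have hπx : π x ≠ 1 := fun h => hBs ((QuotientGroup.eq_one_iff x).mp h)
  -- the quotient is torsion
  have hxtor : IsOfFinOrder (π x) := by
    rcases eq_or_ne ((π x) ^ (2 : ℤ)) 1 with h2 | h2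
    · exact isOfFinOrder_of_zpow_eq_one two_ne_zero h2
    · obtain ⟨k, hk⟩ := key2 _ h2
      have hk' : ((π x) ^ (2 : ℤ)) ^ k = π x := hk
      rw [← zpow_mul] at hk'
      have hzp : (π x) ^ (2 * k - 1) = 1 := by
        rw [zpow_sub, zpow_one, hk', mul_inv_cancel]
      refine isOfFinOrder_of_zpow_eq_one (by omega) hzp
  have htor : ∀ q : A ⧸ B, IsOfFinOrder q := by
    intro q
    rcases eq_or_ne q 1 with rfl | hq
    · exact IsOfFinOrder.one
    · obtain ⟨k, hk⟩ := key2 q hq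
      have hk' : q ^ k = π x := hk
      have hk0 : k ≠ 0 := by rintro rfl; rw [zpow_zero] at hk'; exact hπx hk'.symm
      obtain ⟨m, hm0, hm⟩ := isOfFinOrder_iff_pow_eq_one.mp hxtor
      refine isOfFinOrder_of_zpow_eq_one (k := k * m) ?_ ?_
      · exact mul_ne_zero hk0 (by exact_mod_cast hm0.ne')
      · rw [zpow_mul, hk', zpow_natCast, hm]
  haveI : Finite (A ⧸ B) := CommGroup.finite_of_fg_torsion _ htor
  refine ⟨B, ⟨?_⟩, hBs⟩
  rw [Subgroup.index_eq_card]
  exact Nat.card_ne_zero.mpr ⟨⟨1⟩, inferInstance⟩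

private lemma finiteIndex_map_subtype {K : Subgroup G} [K.FiniteIndex] (M : Subgroup ↥K)
    [M.FiniteIndex] : (M.map K.subtype).FiniteIndex := by
  have hle : M.map K.subtype ≤ K := Subgroup.map_subtype_le M
  constructor
  have h1 := Subgroup.relIndex_mul_index hle
  have h2 : (M.map K.subtype).subgroupOf K = M :=
    Subgroup.comap_map_eq_self_of_injective K.subtype_injective M
  have h3 : (M.map K.subtype).relIndex K = ((M.map K.subtype).subgroupOf K).index := rfl
  rw [← h1, h3, h2]
  exact mul_ne_zero Subgroup.FiniteIndex.index_ne_zero Subgroup.FiniteIndex.index_ne_zero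

private lemma resFin_of_finiteIndex {K : Subgroup G} (hK : K.FiniteIndex) (h : ResFin ↥K) :
    ResFin G := by
  intro x hx
  by_cases hxK : x ∈ K
  · obtain ⟨M, hMfi, hxM⟩ := h ⟨x, hxK⟩ (fun hh => hx (congrArg Subtype.val hh))
    haveI := hK; haveI := hMfi
    refine ⟨M.map K.subtype, finiteIndex_map_subtype M, fun hmem => hxM ?_⟩
    obtain ⟨y, hyM, hy⟩ := hmem
    rwa [show (⟨x, hxK⟩ : ↥K) = y from Subtype.ext hy.symm]
  · exact ⟨K, hK, hxK⟩

end Helpers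

private lemma resFin_solvable : ∀ (n : ℕ) (G : Type u) [Group G],
    (∀ H : Subgroup G, H.FG) → derivedSeries G n = ⊥ → ResFin G := by
  intro n
  induction n with
  | zero =>
    intro G _ _ h x hx
    refine absurd ?_ hx
    have hxb : x ∈ (⊥ : Subgroup G) := by rw [← h, derivedSeries_zero]; exact Subgroup.mem_top x
    exact Subgroup.mem_bot.mp hxb
  | succ n ih =>
    intro G _ hmax hbot x hx
    haveI : Group.IsSolvable G := ⟨⟨n + 1, hbot⟩⟩
    by_cases hxN : x ∈ commutator G
    · -- the hard case: x lies in the commutator subgroup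
      have hres : ResFin ↥(commutator G) :=
        ih ↥(commutator G) (fg_of_subgroup hmax _)
          (derivedSeries_succ_bot hbot _ (derivedSeries_one G).ge)
      obtain ⟨M, hMfi, hxM⟩ := hres ⟨x, hxN⟩ (fun hh => hx (congrArg Subtype.val hh))
      haveI := hMfi
      haveI : M.normalCore.FiniteIndex := Subgroup.finiteIndex_normalCore M
      set e := M.normalCore.index with he
      have he0 : e ≠ 0 := Subgroup.FiniteIndex.index_ne_zero
      set S : Set G := {g : G | ∃ y ∈ commutator G, y ^ e = g} with hS
      set E := Subgroup.closure S with hE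
      have hEle : E ≤ M.normalCore.map (commutator G).subtype := by
        rw [hE, Subgroup.closure_le]
        rintro g ⟨y, hy, rfl⟩
        exact ⟨⟨y, hy⟩ ^ e, M.normalCore.pow_index_mem ⟨y, hy⟩, rfl⟩
      haveI hEnormal : E.Normal := by
        constructor
        intro g hg c
        refine Subgroup.closure_induction (p := fun y _ => c * y * c⁻¹ ∈ E)
          (fun y hy => ?_) (by simpa using one_mem E)
          (fun y z _ _ hyc hzc => ?_) (fun y _ hyc => ?_) hg
        · obtain ⟨w, hw, rfl⟩ := hy
          refine Subgroup.subset_closure ⟨c * w * c⁻¹, ?_, conj_pow⟩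
          exact Subgroup.Normal.conj_mem inferInstance w hw c
        · have hyz : c * (y * z) * c⁻¹ = (c * y * c⁻¹) * (c * z * c⁻¹) := by group
          show c * (y * z) * c⁻¹ ∈ E
          rw [hyz]; exact mul_mem hyc hzc
        · have hyz : c * y⁻¹ * c⁻¹ = (c * y * c⁻¹)⁻¹ := by group
          show c * y⁻¹ * c⁻¹ ∈ E
          rw [hyz]; exact inv_mem hyc
      have hxE : x ∉ E := by
        intro hmem
        obtain ⟨y, hyM, hy⟩ := hEle hmem
        rw [show (⟨x, hxN⟩ : ↥(commutator G)) = y from Subtype.ext hy.symm] at hxM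
        exact hxM (Subgroup.normalCore_le M hyM)
      set π := QuotientGroup.mk' E with hπ
      have hπs : Function.Surjective π := QuotientGroup.mk'_surjective E
      set F := (commutator G).map π with hF
      haveI hFnorm : F.Normal :=
        Subgroup.Normal.map inferInstance π hπs
      have hFtor : ∀ a : ↥F, IsOfFinOrder a := by
        intro a
        rw [← isOfFinOrder_coe_iff]
        obtain ⟨y, hyN, hya⟩ := a.2
        refine isOfFinOrder_iff_pow_eq_one.mpr ⟨e, Nat.pos_of_ne_zero he0, ?_⟩
        rw [← hya, ← map_pow]
        have : y ^ e ∈ E := Subgroup.subset_closure ⟨y, hyN, rfl⟩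
        rwa [← QuotientGroup.ker_mk' E, MonoidHom.mem_ker] at this
      haveI hFfin : Finite ↥F :=
        finite_of_torsion' ↥F (fg_of_subgroup (fg_of_quotient hmax E) F) hFtor
      set f := Nat.card ↥F with hf
      have hf0 : f ≠ 0 := Nat.card_ne_zero.mpr ⟨⟨⟨1, one_mem F⟩⟩, inferInstance⟩
      set C : Subgroup (G ⧸ E) := ⨅ (a : ↥F), Subgroup.centralizer {(a : G ⧸ E)} with hC
      haveI hCfi : C.FiniteIndex := by
        refine Subgroup.finiteIndex_iInf (fun a => ⟨?_⟩)
        rw [Subgroup.centralizer_eq_comap_stabilizer]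
        erw [Subgroup.index_comap_of_surjective _ (MulEquiv.surjective _),
          MulAction.index_stabilizer]
        have horb : (MulAction.orbit (ConjAct (G ⧸ E)) (a : G ⧸ E)) ⊆ (F : Set (G ⧸ E)) := by
          rintro q ⟨g, rfl⟩
          exact hFnorm.conj_mem _ a.2 (ConjAct.ofConjAct g)
        have hfin : (MulAction.orbit (ConjAct (G ⧸ E)) (a : G ⧸ E)).Finite :=
          Set.Finite.subset (F : Set (G ⧸ E)).toFinite horb
        have hne : (MulAction.orbit (ConjAct (G ⧸ E)) (a : G ⧸ E)).Nonempty :=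
          ⟨_, MulAction.mem_orbit_self _⟩
        exact ((Set.ncard_pos hfin).mpr hne).ne'
      have hCcomm : ∀ c : G ⧸ E, c ∈ C → ∀ q : G ⧸ E, q ∈ F → q * c = c * q := by
        intro c hc q hq
        have h1 := Subgroup.mem_iInf.mp hc ⟨q, hq⟩
        exact Subgroup.mem_centralizer_iff.mp h1 q rfl
      -- the center of C has finite index in C
      set Z := Subgroup.center ↥C with hZ
      have hQcomm : F = commutator (G ⧸ E) := by
        have htop : Subgroup.map π ⊤ = ⊤ := by
          rw [← MonoidHom.range_eq_map]
          exact MonoidHom.range_eq_top_of_surjective π hπs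
        rw [hF, _root_.commutator_def, _root_.commutator_def, Subgroup.map_commutator, htop]
      have hcent : ∀ h : ↥C, h ^ f ∈ Z := by
        intro h
        rw [Subgroup.mem_center_iff]
        intro b
        have hfmem : ∀ u : ↥C, ((⁅h, u⁆ : ↥C) : G ⧸ E) ∈ F := by
          intro u
          have h1 : (⁅(h : G ⧸ E), (u : G ⧸ E)⁆) ∈ commutator (G ⧸ E) := by
            rw [_root_.commutator_def]
            exact Subgroup.commutator_mem_commutator (Subgroup.mem_top _) (Subgroup.mem_top _)
          rw [hQcomm]
          simpa [commutatorElement_def] using h1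
        have hcomm_c : ∀ u : ↥C, Commute (⁅h, b⁆ : ↥C) u := by
          intro u
          have h2 := hCcomm (u : G ⧸ E) u.2 ((⁅h, b⁆ : ↥C) : G ⧸ E) (hfmem b)
          exact Subtype.ext h2
        have hpow : ∀ k : ℕ, (⁅h ^ k, b⁆ : ↥C) = ⁅h, b⁆ ^ k := by
          intro k
          induction k with
          | zero => simp [commutatorElement_def]
          | succ k ihk =>
            have h1 : (⁅h ^ (k + 1), b⁆ : ↥C) = h * ⁅h ^ k, b⁆ * h⁻¹ * ⁅h, b⁆ := by
              simp only [commutatorElement_def, pow_succ']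
              group
            rw [h1, ihk]
            have h2 : h * ⁅h, b⁆ ^ k * h⁻¹ = ⁅h, b⁆ ^ k := by
              rw [← ((hcomm_c h).pow_left k).eq, mul_assoc, mul_inv_cancel, mul_one]
            rw [h2, pow_succ]
        have hordc : (⁅h, b⁆ : ↥C) ^ f = 1 := by
          have h3 : ((⁅h, b⁆ : ↥C) : G ⧸ E) ^ f = 1 :=
            orderOf_dvd_iff_pow_eq_one.mp (Subgroup.orderOf_dvd_natCard F (hfmem b))
          exact Subtype.ext (by simpa using h3)
        have h6 : ⁅h ^ f, b⁆ = (1 : ↥C) := by rw [hpow f, hordc]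
        exact ((commutatorElement_eq_one_iff_commute.mp h6).symm).eq
      haveI : Finite (↥C ⧸ Z) := by
        refine finite_of_torsion' _ (fg_of_quotient (fg_of_subgroup (fg_of_quotient hmax E) C) Z) ?_
        intro q
        obtain ⟨h, rfl⟩ := QuotientGroup.mk'_surjective Z q
        refine isOfFinOrder_iff_pow_eq_one.mpr ⟨f, Nat.pos_of_ne_zero hf0, ?_⟩
        rw [← map_pow]
        have : h ^ f ∈ (QuotientGroup.mk' Z).ker := by
          rw [QuotientGroup.ker_mk']; exact hcent h
        rwa [MonoidHom.mem_ker] at this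
      haveI hZfi : Z.FiniteIndex := by
        constructor
        rw [Subgroup.index_eq_card]
        exact Nat.card_ne_zero.mpr ⟨⟨1⟩, inferInstance⟩
      haveI : Group.FG ↥Z :=
        (Group.fg_iff_subgroup_fg Z).mpr (fg_of_subgroup (fg_of_quotient hmax E) C Z)
      have hZres : ResFin ↥Z := @resFin_comm ↥Z { (inferInstance : Group ↥Z) with mul_comm := fun a b => Subtype.ext (Subgroup.mem_center_iff.mp b.2 a) } _
      have hCres : ResFin ↥C := resFin_of_finiteIndex hZfi hZres
      have hQres : ResFin (G ⧸ E) := resFin_of_finiteIndex hCfi hCres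
      have hπx : π x ≠ 1 := by
        intro hh
        rw [← MonoidHom.mem_ker, QuotientGroup.ker_mk'] at hh
        exact hxE hh
      obtain ⟨H, hHfi, hxH⟩ := hQres (π x) hπx
      exact ⟨H.comap π,
        ⟨by rw [Subgroup.index_comap_of_surjective _ hπs]; exact hHfi.index_ne_zero⟩,
        fun hc => hxH hc⟩
    · -- separate x in the abelianization
      haveI : Group.FG G := Group.fg_def.mpr (hmax ⊤)
      have hsurj : Function.Surjective (Abelianization.of (G := G)) := fun q =>
        QuotientGroup.mk_surjective q
      haveI : Group.FG (Abelianization G) := Group.fg_of_surjective hsurj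
      have hone : Abelianization.of x ≠ 1 := by
        intro hh
        exact hxN ((QuotientGroup.eq_one_iff x).mp hh)
      obtain ⟨H, hHfi, hxH⟩ := resFin_comm (Abelianization G) _ hone
      exact ⟨H.comap Abelianization.of,
        ⟨by rw [Subgroup.index_comap_of_surjective _ hsurj]; exact hHfi.index_ne_zero⟩,
        fun hmem => hxH hmem⟩

private lemma resFin_solvable' (G : Type u) [Group G] [hs : Group.IsSolvable G]
    (hmax : ∀ H : Subgroup G, H.FG) : ResFin G := by
  obtain ⟨n, hn⟩ := hs
  exact resFin_solvable n G hmax hn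

private lemma torsionFree_subgroup : ∀ (n : ℕ) (G : Type u) [Group G],
    (∀ H : Subgroup G, H.FG) → derivedSeries G n = ⊥ →
    ∃ K : Subgroup G, K.FiniteIndex ∧ ∀ g ∈ K, g ≠ 1 → ¬IsOfFinOrder g := by
  intro n
  induction n with
  | zero =>
    intro G _ _ h
    refine ⟨⊤, inferInstance, fun g _ hg _ => hg ?_⟩
    have hxb : g ∈ (⊥ : Subgroup G) := by rw [← h, derivedSeries_zero]; exact Subgroup.mem_top g
    exact Subgroup.mem_bot.mp hxb
  | succ n ih =>
    intro G _ hmax hbot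
    haveI : Group.IsSolvable G := ⟨⟨n + 1, hbot⟩⟩
    set A := derivedSeries G n with hA
    haveI hAnorm : A.Normal := derivedSeries_normal G n
    set π := QuotientGroup.mk' A with hπ
    have hπs : Function.Surjective π := QuotientGroup.mk'_surjective A
    have hQbot : derivedSeries (G ⧸ A) n = ⊥ := by
      rw [← map_derivedSeries_eq hπs n, ← hA, (Subgroup.map_eq_bot_iff _).mpr]
      rw [QuotientGroup.ker_mk' A]
    obtain ⟨K', hK'fi, hK'tf⟩ := ih (G ⧸ A) (fg_of_quotient hmax A) hQbot
    set K₁ := K'.comap π with hK₁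
    haveI hK₁fi : K₁.FiniteIndex :=
      ⟨by rw [Subgroup.index_comap_of_surjective _ hπs]; exact hK'fi.index_ne_zero⟩
    have hAcomm : ∀ a ∈ A, ∀ b ∈ A, a * b = b * a := by
      have hAb : ⁅A, A⁆ = ⊥ := by rw [← derivedSeries_succ]; exact hbot
      intro a ha b hb
      exact (Subgroup.mem_centralizer_iff.mp
        (Subgroup.commutator_eq_bot_iff_le_centralizer.mp hAb ha) b hb).symm
    set T : Subgroup G :=
      { carrier := {g | g ∈ A ∧ IsOfFinOrder g}
        one_mem' := ⟨one_mem A, IsOfFinOrder.one⟩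
        mul_mem' := fun {a b} ha hb =>
          ⟨mul_mem ha.1 hb.1, (show Commute a b from hAcomm a ha.1 b hb.1).isOfFinOrder_mul ha.2 hb.2⟩
        inv_mem' := fun {a} ha => ⟨inv_mem ha.1, ha.2.inv⟩ } with hT
    have hTle : T ≤ A := fun g hg => hg.1
    haveI hTfin : Finite ↥T := by
      haveI : Group.IsSolvable ↥T :=
        isSolvable_of_comm (fun a b => Subtype.ext (hAcomm _ a.2.1 _ b.2.1))
      exact finite_of_torsion' ↥T (fg_of_subgroup hmax T)
        (fun g => (isOfFinOrder_coe_iff g).mp g.2.2)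
    have hres : ResFin ↥K₁ := resFin_solvable' ↥K₁ (fg_of_subgroup hmax K₁)
    have hTleK₁ : T ≤ K₁ := by
      intro g hg
      have hgA : g ∈ A := hTle hg
      have : π g = 1 := by rw [← MonoidHom.mem_ker, QuotientGroup.ker_mk']; exact hgA
      show π g ∈ K'
      rw [this]; exact one_mem K'
    have hchoice : ∀ t : ↥T, ∃ D : Subgroup ↥K₁,
        D.FiniteIndex ∧ ((t : G) ≠ 1 → (⟨(t : G), hTleK₁ t.2⟩ : ↥K₁) ∉ D) := by
      intro t
      by_cases h1 : (t : G) = 1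
      · exact ⟨⊤, inferInstance, fun h => absurd h1 h⟩
      · obtain ⟨D, hDfi, hD⟩ := hres ⟨(t : G), hTleK₁ t.2⟩
          (fun hh => h1 (congrArg Subtype.val hh))
        exact ⟨D, hDfi, fun _ => hD⟩
    choose Ds hDfi hDavoid using hchoice
    set D := ⨅ t, Ds t with hD
    haveI hDfi' : D.FiniteIndex := Subgroup.finiteIndex_iInf hDfi
    refine ⟨D.map K₁.subtype, finiteIndex_map_subtype D, ?_⟩
    rintro g hgmem hg1 hford
    obtain ⟨d, hdD, rfl⟩ := hgmem
    by_cases hπ1 : π (d : G) = 1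
    · have hdA : (d : G) ∈ A := by
        rw [← QuotientGroup.ker_mk' A, MonoidHom.mem_ker]; exact hπ1
      have hdT : (d : G) ∈ T := ⟨hdA, hford⟩
      refine hDavoid ⟨(d : G), hdT⟩ hg1 ?_
      have heq : (⟨(d : G), hTleK₁ hdT⟩ : ↥K₁) = d := Subtype.ext rfl
      rw [heq]
      exact Subgroup.mem_iInf.mp hdD _
    · exact hK'tf _ d.2 hπ1 (π.isOfFinOrder hford)

/-- The old Mathlib `Monoid.IsTorsionFree` (removed since): no nontrivial element has finite order. -/
def Monoid.IsTorsionFree (G : Type*) [Monoid G] : Prop :=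
  ∀ g : G, g ≠ 1 → ¬IsOfFinOrder g

/-- (Hirsch) Let `G` be polycyclic (i.e. soluble with every subgroup finitely
generated) and let `x ≠ 1` in `G`.  Then for some `m > 0` the subgroup `G^m`
generated by all `m`-th powers is torsion-free and does not contain `x`. -/
theorem stmt_16 {G : Type*} [Group G] (hsol : IsSolvable G)
    (hmax : ∀ H : Subgroup G, H.FG) (x : G) (hx : x ≠ 1) :
    ∃ m : ℕ, 0 < m ∧
      Monoid.IsTorsionFree ↥(Subgroup.closure { g : G | ∃ y : G, y ^ m = g }) ∧
      x ∉ Subgroup.closure { g : G | ∃ y : G, y ^ m = g } := by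
  obtain ⟨n, hn⟩ := hsol
  obtain ⟨H, hHfi, hxH⟩ := resFin_solvable n G hmax hn x hx
  obtain ⟨K, hKfi, hKtf⟩ := torsionFree_subgroup n G hmax hn
  haveI := hHfi; haveI := hKfi
  set L := (H ⊓ K).normalCore with hL
  haveI : L.FiniteIndex := Subgroup.finiteIndex_normalCore _
  haveI : L.Normal := Subgroup.normalCore_normal _
  have hle : Subgroup.closure {g : G | ∃ y : G, y ^ L.index = g} ≤ L := by
    rw [Subgroup.closure_le]
    rintro g ⟨y, rfl⟩
    exact L.pow_index_mem y
  refine ⟨L.index, Nat.pos_of_ne_zero Subgroup.FiniteIndex.index_ne_zero, ?_, ?_⟩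
  · intro a ha hford
    have h1 : (a : G) ∈ K := (Subgroup.normalCore_le _ (hle a.2)).2
    exact hKtf _ h1 (fun h => ha (Subtype.ext h)) ((isOfFinOrder_coe_iff a).mpr hford)
  · intro hmem
    exact hxH (Subgroup.normalCore_le _ (hle hmem)).1
end

section
/- (Schur) Let G be a group whose centre Z(G) has finite index m in G. Then the map x ↦ x^m is a group homomorphism from G to G (with image contained in Z(G)), and the commutator subgroup G' = [G,G] is finite with |G'| an m-number, i.e. |G'| divides some power of m. -/
open scoped commutatorElement

lemma comm_mul_center {G : Type*} [Group G] (a b zg zh : G)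
    (h1 : zg ∈ Subgroup.center G) (h2 : zh ∈ Subgroup.center G) :
    ⁅a * zg, b * zh⁆ = ⁅a, b⁆ := by
  have c1 : ∀ x : G, x * zg = zg * x := Subgroup.mem_center_iff.mp h1
  have c2 : ∀ x : G, x * zh = zh * x := Subgroup.mem_center_iff.mp h2
  have e1 : zg * b * zg⁻¹ = b := by rw [← c1 b]; group
  have e2 : (a * zg) * zh * (a * zg)⁻¹ = zh := by rw [c2 (a * zg)]; group
  calc ⁅a * zg, b * zh⁆
      = ((a * zg) * b * (a * zg)⁻¹) * ((a * zg) * zh * (a * zg)⁻¹) * (zh⁻¹ * b⁻¹) := by group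
    _ = (a * (zg * b * zg⁻¹) * a⁻¹) * zh * (zh⁻¹ * b⁻¹) := by rw [e2]; group
    _ = ⁅a, b⁆ := by rw [e1]; group

lemma comm_eq_out {G : Type*} [Group G] (g h : G) :
    ⁅g, h⁆ = ⁅((g : G ⧸ Subgroup.center G) : G ⧸ Subgroup.center G).out,
              ((h : G ⧸ Subgroup.center G) : G ⧸ Subgroup.center G).out⁆ := by
  set Z := Subgroup.center G
  have hg : (g : G ⧸ Z).out⁻¹ * g ∈ Z := QuotientGroup.eq.mp (QuotientGroup.out_eq' (g : G ⧸ Z))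
  have hh : (h : G ⧸ Z).out⁻¹ * h ∈ Z := QuotientGroup.eq.mp (QuotientGroup.out_eq' (h : G ⧸ Z))
  have hge : g = (g : G ⧸ Z).out * ((g : G ⧸ Z).out⁻¹ * g) := by group
  have hhe : h = (h : G ⧸ Z).out * ((h : G ⧸ Z).out⁻¹ * h) := by group
  conv_lhs => rw [hge, hhe]
  exact comm_mul_center _ _ _ _ hg hh

lemma finite_commutatorSet_of_finiteIndex_center {G : Type*} [Group G]
    [Subgroup.FiniteIndex (Subgroup.center G)] : Finite (commutatorSet G) := by
  classical
  set Z := Subgroup.center G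
  haveI : Finite (G ⧸ Z) := Z.finite_quotient_of_finiteIndex
  haveI : Nonempty (commutatorSet G) := ⟨⟨⁅(1:G), 1⁆, 1, 1, rfl⟩⟩
  apply Finite.of_surjective (f := fun p : (G ⧸ Z) × (G ⧸ Z) =>
    if h : ⁅p.1.out, p.2.out⁆ ∈ commutatorSet G then (⟨_, h⟩ : commutatorSet G)
    else Classical.arbitrary _)
  rintro ⟨c, g, h, rfl⟩
  refine ⟨((g : G ⧸ Z), (h : G ⧸ Z)), ?_⟩
  have key := (comm_eq_out g h).symm
  simp only
  split
  · exact Subtype.ext key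
  · next hneg => exact absurd ⟨_, _, rfl⟩ hneg

/-- (Schur) If the centre of `G` has finite index `m`, then `x ↦ x^m` is a
homomorphism of `G` into its centre, and the commutator subgroup `G'` is finite
of order dividing a power of `m`. -/
theorem stmt_17 {G : Type*} [Group G] {m : ℕ}
    (hm : (Subgroup.center G).index = m) (hm0 : m ≠ 0) :
    (∀ x y : G, (x * y) ^ m = x ^ m * y ^ m) ∧
    (∀ x : G, x ^ m ∈ Subgroup.center G) ∧
    Finite ↥(commutator G) ∧
    ∃ k : ℕ, Nat.card ↥(commutator G) ∣ m ^ k := by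
  haveI : (Subgroup.center G).FiniteIndex := ⟨hm ▸ hm0⟩
  haveI : Finite (commutatorSet G) := finite_commutatorSet_of_finiteIndex_center
  refine ⟨?_, ?_, inferInstance, ?_⟩
  · intro x y
    have h1 : ((MonoidHom.transferCenterPow G) (x * y) : G) =
        ((MonoidHom.transferCenterPow G) x : G) * ((MonoidHom.transferCenterPow G) y : G) := by
      rw [map_mul]; rfl
    simpa only [MonoidHom.transferCenterPow_apply, hm] using h1
  · intro x
    exact hm ▸ (Subgroup.center G).pow_index_mem x
  · exact ⟨_, hm ▸ Subgroup.card_commutator_dvd_index_center_pow (G := G)⟩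
end

section
/- (Baer) Let H be a normal subgroup of a group G and let K be a subgroup of H such that [K, G] = 1 (i.e. K is contained in the centre of G) and the index [H : K] = m is finite. Then [H, G]^m = 1, i.e. every element of the subgroup [H,G] has order dividing m. -/
open scoped commutatorElement IsMulCommutative

/-- (Baer) Let `H ⊴ G`, and let `K ≤ H` be central in `G` (`[K,G] = 1`) with
`[H : K] = m` finite.  Then `[H,G]^m = 1`, i.e. every element of `[H,G]` has
order dividing `m`. -/
theorem stmt_18 {G : Type*} [Group G] (H K : Subgroup G) [H.Normal]
    (hKH : K ≤ H) (hKZ : ⁅K, (⊤ : Subgroup G)⁆ = ⊥) {m : ℕ}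
    (hm : K.relIndex H = m) (hm0 : m ≠ 0) :
    ∀ x ∈ ⁅H, (⊤ : Subgroup G)⁆, x ^ m = 1 := by
  classical
  -- K is central in G
  have hKcen : K ≤ Subgroup.center G := by
    intro k hk
    rw [Subgroup.mem_center_iff]
    intro g
    have : ⁅k, g⁆ ∈ (⊥ : Subgroup G) := by
      rw [← hKZ]
      exact Subgroup.commutator_mem_commutator hk (Subgroup.mem_top g)
    rw [Subgroup.mem_bot, commutatorElement_eq_one_iff_mul_comm] at this
    rw [this]
  set K' : Subgroup ↥H := K.subgroupOf H with hK'
  haveI : K'.FiniteIndex := ⟨by rwa [hK', ← Subgroup.relIndex, hm]⟩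
  have hindex : K'.index = m := by rwa [hK', ← Subgroup.relIndex]
  -- the map into the center
  have hmemcen : ∀ k : ↥K', ((k : ↥H) : G) ∈ Subgroup.center G := fun k =>
    hKcen (Subgroup.mem_subgroupOf.mp k.2)
  let ϕ : ↥K' →* Subgroup.center G :=
    MonoidHom.mk' (fun k => ⟨((k : ↥H) : G), hmemcen k⟩) (by intro a b; rfl)
  -- elements of K' satisfy the transfer hypothesis
  have key : ∀ (h : ↥H) (k : ℕ) (g₀ : ↥H), g₀⁻¹ * h ^ k * g₀ ∈ K' →
      g₀⁻¹ * h ^ k * g₀ = h ^ k := by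
    intro h k g₀ hmem
    have hc : ((g₀⁻¹ * h ^ k * g₀ : ↥H) : G) ∈ Subgroup.center G :=
      hKcen (Subgroup.mem_subgroupOf.mp hmem)
    have hcomm := Subgroup.mem_center_iff.mp hc (g₀ : G)
    push_cast at hcomm
    apply Subtype.ext
    push_cast
    have h2 : (g₀:G) * ((g₀:G)⁻¹ * (h:G)^k * (g₀:G)) * (g₀:G)⁻¹
        = ((g₀:G)⁻¹ * (h:G)^k * (g₀:G)) := by rw [hcomm]; group
    have h3 : (g₀:G)⁻¹ * (h:G)^k * (g₀:G) = (h:G)^k := by rw [← h2]; group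
    first
    | exact h3
    | exact h3.symm
    | (rw [h3])
  -- transfer: h ↦ h ^ m is a homomorphism H → center G
  let F : ↥H →* G := (Subgroup.center G).subtype.comp (MonoidHom.transfer ϕ)
  have hF : ∀ h : ↥H, F h = (h : G) ^ m := by
    intro h
    have := MonoidHom.transfer_eq_pow ϕ h (key h)
    simp only [F, MonoidHom.comp_apply, this]
    show (((h ^ K'.index : ↥H)) : G) = (h : G) ^ m
    rw [hindex]
    push_cast
    rfl
  have hFcen : ∀ h : ↥H, F h ∈ Subgroup.center G := fun h => ((MonoidHom.transfer ϕ) h).2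
  -- the subgroup of elements of H killed by F
  have hle : ⁅H, (⊤ : Subgroup G)⁆ ≤ Subgroup.map H.subtype F.ker := by
    rw [Subgroup.commutator_le]
    intro h hh g _
    have hgH : g⁻¹ * h * g ∈ H := by
      simpa using (‹H.Normal›.conj_mem h hh g⁻¹)
    have hb : g * h⁻¹ * g⁻¹ ∈ H := ‹H.Normal›.conj_mem h⁻¹ (H.inv_mem hh) g
    have hcm : ⁅h, g⁆ ∈ H := by
      rw [commutatorElement_def]
      have := H.mul_mem hh hb
      simpa [mul_assoc] using this
    refine Subgroup.mem_map.mpr ⟨⟨⁅h, g⁆, hcm⟩, ?_, rfl⟩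
    rw [MonoidHom.mem_ker]
    have heq : (⟨⁅h, g⁆, hcm⟩ : ↥H) = ⟨h, hh⟩ * ⟨g * h⁻¹ * g⁻¹, hb⟩ := by
      apply Subtype.ext
      push_cast
      rw [commutatorElement_def]
      group
    rw [heq, map_mul, hF, hF]
    show (h : G) ^ m * (g * h⁻¹ * g⁻¹) ^ m = 1
    have hcen : h ^ m ∈ Subgroup.center G := by
      have := hFcen ⟨h, hh⟩
      rwa [hF] at this
    have h1 := Subgroup.mem_center_iff.mp hcen g
    have hpow : (g * h⁻¹ * g⁻¹) ^ m = g * (h ^ m)⁻¹ * g⁻¹ := by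
      rw [conj_pow, inv_pow]
    have hconj : g * (h ^ m) * g⁻¹ = h ^ m := by rw [h1]; group
    have hcg : g * (h ^ m)⁻¹ * g⁻¹ = (h ^ m)⁻¹ := by
      calc g * (h ^ m)⁻¹ * g⁻¹ = (g * h ^ m * g⁻¹)⁻¹ := by group
        _ = (h ^ m)⁻¹ := by rw [hconj]
    rw [hpow, hcg]
    group
  -- conclude
  intro x hx
  obtain ⟨y, hy, rfl⟩ := hle hx
  have := hF y
  rw [MonoidHom.mem_ker.mp hy] at this
  exact this.symm
end

section
/- (Malcev) Every abelian subgroup A of the unimodular group U_n = GL(n, ℤ) of invertible n × n integer matrices is finitely generated. -/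
open Function

/-- A group all of whose subgroups are finitely generated. -/
def NoethG (G : Type*) [Group G] : Prop := ∀ H : Subgroup G, Group.FG ↥H

lemma fg_of_mulEquiv {G H : Type*} [Group G] [Group H] (e : G ≃* H) [Group.FG G] :
    Group.FG H :=
  Group.fg_of_surjective (f := e.toMonoidHom) e.surjective

lemma noethG_of_injective {G P : Type*} [Group G] [Group P] (f : G →* P)
    (hf : Injective f) (hP : NoethG P) : NoethG G := by
  intro H
  haveI := hP (H.map f)
  exact fg_of_mulEquiv (H.equivMapOfInjective f hf).symm

lemma noethG_of_finite (G : Type*) [Group G] [Finite G] : NoethG G := fun _ => inferInstance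

lemma Subgroup.FG.map' {G N : Type*} [Group G] [Group N] {H : Subgroup G} (h : H.FG)
    (f : G →* N) : (H.map f).FG := by
  rw [Subgroup.fg_iff] at h ⊢
  obtain ⟨S, hS, hfin⟩ := h
  exact ⟨f '' S, by rw [← MonoidHom.map_closure, hS], hfin.image f⟩

lemma Subgroup.fg_of_map_of_inf_ker {P Q : Type*} [Group P] [Group Q] (φ : P →* Q)
    (H : Subgroup P) (h1 : (H.map φ).FG) (h2 : (H ⊓ φ.ker).FG) : H.FG := by
  rw [Subgroup.fg_iff] at h1 h2 ⊢
  obtain ⟨S, hS, hSfin⟩ := h2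
  obtain ⟨T, hT, hTfin⟩ := h1
  have hTsub : ∀ t ∈ T, ∃ p, p ∈ H ∧ φ p = t := by
    intro t ht
    have : t ∈ H.map φ := hT ▸ Subgroup.subset_closure ht
    obtain ⟨p, hp, rfl⟩ := this
    exact ⟨p, hp, rfl⟩
  classical
  choose g hg1 hg2 using hTsub
  have hTfin' : Finite T := hTfin
  let T₀ : Set P := Set.range (fun t : T => g t t.2)
  have hT₀fin : T₀.Finite := Set.finite_range _
  have hT₀H : T₀ ⊆ (H : Set P) := by rintro _ ⟨t, rfl⟩; exact hg1 t t.2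
  have himT : φ '' T₀ = T := by
    apply Set.eq_of_subset_of_subset
    · rintro _ ⟨_, ⟨t, rfl⟩, rfl⟩; rw [hg2 t t.2]; exact t.2
    · intro t ht; exact ⟨g t ht, ⟨⟨t, ht⟩, rfl⟩, hg2 t ht⟩
  refine ⟨S ∪ T₀, ?_, hSfin.union hT₀fin⟩
  have hSH : S ⊆ (H : Set P) := by
    intro x hx
    exact (inf_le_left : H ⊓ φ.ker ≤ H) (hS ▸ Subgroup.subset_closure hx)
  apply le_antisymm
  · rw [Subgroup.closure_le]
    exact Set.union_subset hSH hT₀H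
  · intro h hh
    have hφ : φ h ∈ Subgroup.map φ (Subgroup.closure T₀) := by
      rw [MonoidHom.map_closure, himT, hT]
      exact ⟨h, hh, rfl⟩
    obtain ⟨t, htc, hte⟩ := hφ
    have htH : t ∈ H := by
      have : Subgroup.closure T₀ ≤ H := (Subgroup.closure_le _).2 hT₀H
      exact this htc
    have hker : h * t⁻¹ ∈ H ⊓ φ.ker := by
      refine ⟨H.mul_mem hh (H.inv_mem htH), ?_⟩
      simp [MonoidHom.mem_ker, hte]
    have h1' : h * t⁻¹ ∈ Subgroup.closure (S ∪ T₀) := by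
      rw [← hS] at hker
      exact Subgroup.closure_mono Set.subset_union_left hker
    have h2' : t ∈ Subgroup.closure (S ∪ T₀) :=
      Subgroup.closure_mono Set.subset_union_right htc
    simpa using Subgroup.mul_mem _ h1' h2'

lemma noethG_of_ker_range {P Q : Type*} [Group P] [Group Q] (φ : P →* Q)
    (hK : NoethG ↥φ.ker) (hQ : NoethG Q) : NoethG P := by
  intro H
  rw [Group.fg_iff_subgroup_fg]
  apply Subgroup.fg_of_map_of_inf_ker φ
  · exact (Group.fg_iff_subgroup_fg _).1 (hQ _)
  · have h1 : ((H ⊓ φ.ker).subgroupOf φ.ker).FG :=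
      (Group.fg_iff_subgroup_fg _).1 (hK _)
    have h2 := h1.map' φ.ker.subtype
    rwa [Subgroup.subgroupOf_map_subtype, inf_eq_left.2 inf_le_right] at h2

lemma noethG_of_module_finite {G : Type*} [CommGroup G] [hfin : Module.Finite ℤ (Additive G)] :
    NoethG G := by
  intro H
  haveI : IsNoetherian ℤ (Additive G) := isNoetherian_of_isNoetherianRing_of_finite ℤ _
  rw [Group.fg_iff_subgroup_fg, Subgroup.fg_iff_add_fg]
  have h := IsNoetherian.noetherian (AddSubgroup.toIntSubmodule (Subgroup.toAddSubgroup H))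
  rwa [Submodule.fg_iff_addSubgroup_fg] at h
open Function
lemma additive_finite_of_injective {G P : Type*} [CommGroup G] [CommGroup P] (f : G →* P)
    (hf : Injective f) [Module.Finite ℤ (Additive P)] : Module.Finite ℤ (Additive G) := by
  haveI : IsNoetherian ℤ (Additive P) := isNoetherian_of_isNoetherianRing_of_finite ℤ _
  let L := (MonoidHom.toAdditive f).toIntLinearMap
  have hL : Injective L := fun a b h => hf h
  haveI : Module.Finite ℤ ↥(LinearMap.range L) :=
    Module.Finite.iff_fg.2 (IsNoetherian.noetherian _)
  exact Module.Finite.equiv (LinearEquiv.ofInjective L hL).symm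

lemma module_finite_additive_units (D : Type*) [CommRing D] [IsDomain D] [Module.Finite ℤ D] :
    Module.Finite ℤ (Additive Dˣ) := by
  obtain ⟨p, hp⟩ := CharP.exists D
  by_cases hp0 : p = 0
  · subst hp0
    haveI : CharZero D := CharP.charP_to_charZero D
    set K := FractionRing D with hK
    haveI : CharZero K := charZero_of_injective_algebraMap (IsFractionRing.injective D K)
    set f : D →+* K := algebraMap D K with hf
    haveI hKfin : Module.Finite ℚ K := by
      obtain ⟨s, hs⟩ := Module.Finite.fg_top (R := ℤ) (M := D)
      have hrange : Set.range ⇑f ⊆ (Submodule.span ℚ (⇑f '' ↑s) : Set K) := by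
        rintro _ ⟨d, rfl⟩
        have hd : d ∈ Submodule.span ℤ (↑s : Set D) := by rw [hs]; trivial
        have h1 : f d ∈ Submodule.map f.toAddMonoidHom.toIntLinearMap (Submodule.span ℤ ↑s) :=
          Submodule.mem_map_of_mem hd
        rw [Submodule.map_span] at h1
        exact Submodule.span_subset_span ℤ ℚ _ h1
      set T : Subalgebra ℚ K := Algebra.adjoin ℚ (Set.range ⇑f) with hT
      have hTfg : (Subalgebra.toSubmodule T).FG := by
        classical
        rw [hT, Algebra.adjoin_eq_span]
        have hcl : (↑(Submonoid.closure (Set.range ⇑f)) : Set K) = Set.range ⇑f := by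
          rw [← MonoidHom.coe_mrange f, Submonoid.closure_eq]
        rw [hcl]
        have h1 : Submodule.span ℚ (Set.range ⇑f) = Submodule.span ℚ (⇑f '' ↑s) :=
          le_antisymm (Submodule.span_le.2 hrange)
            (Submodule.span_mono (Set.image_subset_range _ _))
        exact h1 ▸ ⟨s.image ⇑f, by rw [Finset.coe_image]⟩
      have htint : ∀ x ∈ T, IsIntegral ℚ x := IsIntegral.of_mem_of_fg T hTfg
      have hTtop : T = ⊤ := by
        rw [eq_top_iff]
        intro z _
        obtain ⟨x, y, hy, hxy⟩ := IsFractionRing.div_surjective (A := D) z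
        have hx : f x ∈ T := Algebra.subset_adjoin ⟨x, rfl⟩
        have hy' : f y ∈ T := Algebra.subset_adjoin ⟨y, rfl⟩
        have hyinv : (f y)⁻¹ ∈ T := by
          have halg : IsAlgebraic ℚ ((⟨f y, hy'⟩ : T) : K) :=
            (htint _ hy').isAlgebraic
          exact T.inv_mem_of_algebraic halg
        rw [← hxy, div_eq_mul_inv]
        exact T.mul_mem hx hyinv
      rw [hTtop] at hTfg
      exact Module.finite_def.2 hTfg
    haveI : NumberField K := ⟨⟩
    haveI : Algebra.IsIntegral ℤ D := Algebra.IsIntegral.of_finite ℤ D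
    have key : ∀ d : D, @IsIntegral ℤ K _ _ (Ring.toIntAlgebra K) (f d) := by
      intro d
      obtain ⟨P, hm, he⟩ := Algebra.IsIntegral.isIntegral (R := ℤ) d
      refine ⟨P, hm, ?_⟩
      have h2 := congrArg f he
      rw [Polynomial.hom_eval₂, map_zero] at h2
      convert h2 using 2
      · rfl
      · exact Subsingleton.elim _ _
    let g : D →+* (NumberField.RingOfIntegers K) :=
      { toFun := fun d => ⟨f d, key d⟩
        map_one' := by ext : 1; exact map_one f
        map_mul' := fun a b => by ext : 1; exact map_mul f a b
        map_zero' := by ext : 1; exact map_zero f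
        map_add' := fun a b => by ext : 1; exact map_add f a b }
    have hginj : Injective g := fun a b h =>
      IsFractionRing.injective D K (congrArg Subtype.val h)
    exact additive_finite_of_injective (Units.map (g : D →* NumberField.RingOfIntegers K)) (Units.map_injective hginj)
  · haveI : NeZero p := ⟨hp0⟩
    letI : Algebra (ZMod p) D := ZMod.algebra D p
    haveI : Module.Finite (ZMod p) D := Module.Finite.of_restrictScalars_finite ℤ (ZMod p) D
    haveI : Finite D := Module.finite_of_finite (ZMod p)
    haveI : Finite Dˣ := inferInstance
    exact Module.Finite.of_finite

lemma finite_of_int_module {M : Type*} [AddCommGroup M] (I : Module ℤ M)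
    {J : Module ℤ M} (h : @Module.Finite ℤ M _ _ I) : @Module.Finite ℤ M _ _ J := by
  haveI : Subsingleton (Module ℤ M) := (AddCommGroup.uniqueIntModule (M := M)).instSubsingleton
  rwa [Subsingleton.elim I J] at h

lemma noethG_multiplicative {M : Type*} [AddCommGroup M] [hM : Module.Finite ℤ M] :
    NoethG (Multiplicative M) := by
  haveI : Module.Finite ℤ (Additive (Multiplicative M)) :=
    finite_of_int_module (inferInstance : Module ℤ M) hM
  exact noethG_of_module_finite

lemma additive_pi_finite {ι : Type*} [Finite ι] (G : ι → Type*) [∀ i, CommGroup (G i)]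
    [∀ i, Module.Finite ℤ (Additive (G i))] : Module.Finite ℤ (Additive (∀ i, G i)) := by
  let e : Additive (∀ i, G i) ≃+ (∀ i, Additive (G i)) :=
    { toFun := fun f i => Additive.ofMul (Additive.toMul f i)
      invFun := fun f => Additive.ofMul (fun i => Additive.toMul (f i))
      left_inv := fun f => rfl
      right_inv := fun f => rfl
      map_add' := fun f g => rfl }
  haveI : Module.Finite ℤ (∀ i, Additive (G i)) :=
    finite_of_int_module (Pi.module ι (fun i => Additive (G i)) ℤ) Module.Finite.pi
  exact Module.Finite.equiv e.toIntLinearEquiv.symm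

/-- The subgroup of units congruent to `1` modulo an ideal. -/
def unitsCong (R : Type*) [CommRing R] (I : Ideal R) : Subgroup Rˣ where
  carrier := {u | (u : R) - 1 ∈ I}
  one_mem' := by simp
  mul_mem' := by
    intro a b ha hb
    have h : ((a * b : Rˣ) : R) - 1 = ((a : R) - 1) * ((b : R) - 1) + ((a : R) - 1)
        + ((b : R) - 1) := by
      rw [Units.val_mul]; ring
    show ((a * b : Rˣ) : R) - 1 ∈ I
    rw [h]
    exact I.add_mem (I.add_mem (I.mul_mem_left _ hb) ha) hb
  inv_mem' := by
    intro a ha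
    have hinv : (↑a⁻¹ : R) * (a : R) = 1 := by
      rw [← Units.val_mul, inv_mul_cancel, Units.val_one]
    have h : (↑a⁻¹ : R) - 1 = -((↑a⁻¹ : R) * ((a : R) - 1)) := by
      rw [mul_sub, mul_one, hinv]; ring
    show (↑a⁻¹ : R) - 1 ∈ I
    rw [h]
    exact I.neg_mem (I.mul_mem_left _ ha)

lemma mem_unitsCong {R : Type*} [CommRing R] {I : Ideal R} {u : Rˣ} :
    u ∈ unitsCong R I ↔ (u : R) - 1 ∈ I := Iff.rfl

lemma noethG_unitsCong (R : Type*) [CommRing R] [Module.Finite ℤ R] :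
    ∀ (k : ℕ) (I : Ideal R), I ^ k = ⊥ → NoethG ↥(unitsCong R I) := by
  intro k
  induction k using Nat.strong_induction_on with
  | _ k ih =>
    intro I hI
    match k, ih with
    | 0, _ =>
      have h1 : (1 : R) ∈ (⊥ : Ideal R) := by rw [← hI]; simp
      have h0 : (1 : R) = 0 := by simpa using h1
      haveI : Subsingleton R := subsingleton_of_zero_eq_one h0.symm
      haveI : Subsingleton Rˣ := ⟨fun a b => Units.ext (Subsingleton.elim _ _)⟩
      haveI : Finite ↥(unitsCong R I) := Finite.of_injective _ Subtype.val_injective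
      exact noethG_of_finite _
    | 1, _ =>
      rw [pow_one] at hI
      haveI : Subsingleton ↥(unitsCong R I) := by
        constructor
        rintro ⟨a, ha⟩ ⟨b, hb⟩
        rw [mem_unitsCong, hI, Ideal.mem_bot, sub_eq_zero] at ha hb
        exact Subtype.ext (Units.ext (ha.trans hb.symm))
      haveI : Finite ↥(unitsCong R I) := inferInstance
      exact noethG_of_finite _
    | (k + 2), ih =>
      -- the map `u ↦ u - 1 mod I^2`
      haveI : Module.Finite ℤ (R ⧸ I ^ 2) := by
        have hf : Function.Surjective
            ((Ideal.Quotient.mk (I ^ 2)).toAddMonoidHom.toIntLinearMap) :=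
          fun y => Ideal.Quotient.mk_surjective y
        exact Module.Finite.of_surjective _ hf
      let ψ : ↥(unitsCong R I) →* Multiplicative (R ⧸ I ^ 2) :=
        { toFun := fun u => Multiplicative.ofAdd (Ideal.Quotient.mk (I ^ 2) (((u : Rˣ) : R) - 1))
          map_one' := by simp
          map_mul' := by
            rintro ⟨a, ha⟩ ⟨b, hb⟩
            apply Multiplicative.toAdd.injective
            show Ideal.Quotient.mk (I ^ 2) (((a * b : Rˣ) : R) - 1)
              = Ideal.Quotient.mk (I ^ 2) (((a : R) - 1)) + Ideal.Quotient.mk (I ^ 2) (((b : R) - 1))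
            rw [← map_add, Ideal.Quotient.mk_eq_mk_iff_sub_mem]
            have h : ((a * b : Rˣ) : R) - 1 - (((a : R) - 1) + ((b : R) - 1))
                = ((a : R) - 1) * ((b : R) - 1) := by
              rw [Units.val_mul]; ring
            rw [h, pow_two]
            exact Ideal.mul_mem_mul ha hb }
      apply noethG_of_ker_range ψ
      · -- kernel embeds into unitsCong R (I ^ 2)
        have hle : ∀ u : ↥ψ.ker, ((u : ↥(unitsCong R I)) : Rˣ) ∈ unitsCong R (I ^ 2) := by
          rintro ⟨⟨u, hu⟩, hku⟩
          have : Ideal.Quotient.mk (I ^ 2) ((u : R) - 1) = 0 := by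
            have := congrArg Multiplicative.toAdd hku
            exact this
          rwa [Ideal.Quotient.eq_zero_iff_mem] at this
        let j : ↥ψ.ker →* ↥(unitsCong R (I ^ 2)) :=
          { toFun := fun u => ⟨((u : ↥(unitsCong R I)) : Rˣ), hle u⟩
            map_one' := rfl
            map_mul' := fun _ _ => rfl }
        have hjinj : Function.Injective j := by
          intro a b h
          have h1 := Subtype.ext_iff.mp h
          exact Subtype.ext (Subtype.ext h1)
        have hpow : (I ^ 2) ^ (k + 1) = ⊥ := by
          rw [← pow_mul]
          rw [eq_bot_iff, ← hI]
          exact Ideal.pow_le_pow_right (by omega)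
        exact noethG_of_injective j hjinj (ih (k + 1) (by omega) (I ^ 2) hpow)
      · exact noethG_multiplicative

lemma noethG_units (R : Type*) [CommRing R] [Module.Finite ℤ R] : NoethG Rˣ := by
  haveI : IsNoetherian ℤ R := isNoetherian_of_isNoetherianRing_of_finite ℤ R
  haveI : IsNoetherianRing R := isNoetherian_of_tower ℤ inferInstance
  obtain ⟨m, hm⟩ := IsNoetherianRing.isNilpotent_nilradical R
  have hfin := minimalPrimes.finite_of_isNoetherianRing R
  haveI := hfin.to_subtype
  let φ : Rˣ →* ∀ p : minimalPrimes R, (R ⧸ (p.1 : Ideal R))ˣ :=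
    Pi.monoidHom fun p => Units.map (Ideal.Quotient.mk p.1).toMonoidHom
  apply noethG_of_ker_range φ
  · -- kernel: embed into unitsCong R (nilradical R)
    have hle : ∀ u : ↥φ.ker, ((u : Rˣ) : R) - 1 ∈ nilradical R := by
      rintro ⟨u, hu⟩
      have hall : ∀ p : minimalPrimes R, ((u : R) - 1) ∈ (p.1 : Ideal R) := by
        intro p
        have h1 : Units.map (Ideal.Quotient.mk p.1).toMonoidHom u = 1 := congrFun hu p
        have h2 : Ideal.Quotient.mk p.1 (u : R) = 1 := congrArg Units.val h1
        have h3 : Ideal.Quotient.mk p.1 ((u : R) - 1) = 0 := by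
          rw [map_sub, map_one, h2, sub_self]
        rwa [Ideal.Quotient.eq_zero_iff_mem] at h3
      have : nilradical R = sInf (minimalPrimes R) := by
        rw [minimalPrimes, Ideal.sInf_minimalPrimes]; rfl
      rw [this]
      exact Submodule.mem_sInf.2 fun p hp => hall ⟨p, hp⟩
    let j : ↥φ.ker →* ↥(unitsCong R (nilradical R)) :=
      { toFun := fun u => ⟨(u : Rˣ), hle u⟩
        map_one' := rfl
        map_mul' := fun _ _ => rfl }
    have hjinj : Function.Injective j := by
      intro a b h
      have h1 : ((a : Rˣ)) = ((b : Rˣ)) :=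
        congrArg (fun x : ↥(unitsCong R (nilradical R)) => x.1) h
      exact Subtype.ext h1
    exact noethG_of_injective j hjinj (noethG_unitsCong R m _ hm)
  · -- image: product of unit groups of domains
    apply noethG_of_module_finite (G := ∀ p : minimalPrimes R, (R ⧸ (p.1 : Ideal R))ˣ)
      (hfin := ?_)
    haveI : ∀ p : minimalPrimes R, Module.Finite ℤ (Additive (R ⧸ (p.1 : Ideal R))ˣ) := by
      intro p
      haveI : (p.1 : Ideal R).IsPrime := p.2.1.1
      haveI : Module.Finite ℤ (R ⧸ (p.1 : Ideal R)) := by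
        have hf : Function.Surjective
            ((Ideal.Quotient.mk (p.1 : Ideal R)).toAddMonoidHom.toIntLinearMap) :=
          fun y => Ideal.Quotient.mk_surjective y
        exact Module.Finite.of_surjective _ hf
      exact module_finite_additive_units _
    exact additive_pi_finite _
/-- (Malcev) Every abelian subgroup of the unimodular group `GL(n, ℤ)` is finitely
generated. -/
theorem stmt_19 (n : ℕ) (A : Subgroup (Matrix.GeneralLinearGroup (Fin n) ℤ))
    (hA : ∀ x ∈ A, ∀ y ∈ A, x * y = y * x) : Group.FG ↥A := by
  classical
  set M := Matrix (Fin n) (Fin n) ℤ with hM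
  let s : Set M := (fun u : Matrix.GeneralLinearGroup (Fin n) ℤ => (u : M)) '' (A : Set _)
  have hcomm : ∀ a ∈ s, ∀ b ∈ s, a * b = b * a := by
    rintro _ ⟨x, hx, rfl⟩ _ ⟨y, hy, rfl⟩
    rw [← Units.val_mul, ← Units.val_mul, hA x hx y hy]
  letI : CommRing ↥(Algebra.adjoin ℤ s) := Algebra.adjoinCommRingOfComm ℤ hcomm
  haveI : Module.Finite ℤ ↥(Algebra.adjoin ℤ s) := by
    haveI : IsNoetherian ℤ M := isNoetherian_of_isNoetherianRing_of_finite ℤ M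
    exact Module.Finite.iff_fg.2
      (IsNoetherian.noetherian (Subalgebra.toSubmodule (Algebra.adjoin ℤ s)))
  let f : ↥A →* (↥(Algebra.adjoin ℤ s))ˣ :=
    { toFun := fun a =>
        { val := ⟨((a : Matrix.GeneralLinearGroup (Fin n) ℤ) : M),
            Algebra.subset_adjoin ⟨a, a.2, rfl⟩⟩
          inv := ⟨(((a : Matrix.GeneralLinearGroup (Fin n) ℤ)⁻¹ : Matrix.GeneralLinearGroup (Fin n) ℤ) : M),
            Algebra.subset_adjoin ⟨(a : Matrix.GeneralLinearGroup (Fin n) ℤ)⁻¹, A.inv_mem a.2, rfl⟩⟩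
          val_inv := Subtype.ext (by
            show ((a : Matrix.GeneralLinearGroup (Fin n) ℤ) : M) * _ = 1
            rw [← Units.val_mul, mul_inv_cancel, Units.val_one])
          inv_val := Subtype.ext (by
            show (((a : Matrix.GeneralLinearGroup (Fin n) ℤ)⁻¹ : Matrix.GeneralLinearGroup (Fin n) ℤ) : M) * _ = 1
            rw [← Units.val_mul, inv_mul_cancel, Units.val_one]) }
      map_one' := by
        apply Units.ext
        exact Subtype.ext rfl
      map_mul' := fun a b => by
        apply Units.ext
        exact Subtype.ext rfl }
  have hinj : Function.Injective f := by
    intro a b h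
    have h1 := congrArg (fun u => ((u : (↥(Algebra.adjoin ℤ s))ˣ) : ↥(Algebra.adjoin ℤ s)).1) h
    exact Subtype.ext (Units.ext h1)
  have hNG : NoethG ↥A := noethG_of_injective f hinj (noethG_units _)
  haveI := hNG ⊤
  exact fg_of_mulEquiv Subgroup.topEquiv
end
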